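/- arXiv:1609.01871 — 7 statements merged into one kernel-verified Lean document; each statement's English description precedes it below -/
import Mathlib

section
/- For every real number a > 0 and every x ∈ ℝ, the integral over s ∈ (0,∞) of (max(1 - x²/s, 0))^a · s^a · e^{-s/4} ds equals 4^{a+1} · Γ(a+1) · e^{-x²/4}. -/
open MeasureTheory Real

/-- Rescaled subordination identity: for `a > 0` and `x ∈ ℝ`,
`∫₀^∞ (max (1 - x²/s) 0)^a s^a e^{-s/4} ds = 4^{a+1} Γ(a+1) e^{-x²/4}`. -/
theorem rescaled_subordination_identity (a : ℝ) (ha : 0 < a) (x : ℝ) :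
    ∫ s in Set.Ioi (0 : ℝ), (max (1 - x ^ 2 / s) 0) ^ a * s ^ a * Real.exp (-s / 4)
      = 4 ^ (a + 1) * Real.Gamma (a + 1) * Real.exp (-x ^ 2 / 4) := by
  have h1 : ∫ s in Set.Ioi (0 : ℝ), (max (1 - x ^ 2 / s) 0) ^ a * s ^ a * Real.exp (-s / 4)
      = ∫ s : ℝ, max (s - x ^ 2) 0 ^ a * Real.exp (-s / 4) := by
    rw [← setIntegral_eq_integral_of_forall_compl_eq_zero
      (f := fun s : ℝ => max (s - x ^ 2) 0 ^ a * Real.exp (-s / 4)) (s := Set.Ioi 0)]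
    · refine setIntegral_congr_fun measurableSet_Ioi fun s hs => ?_
      have hs' : (0 : ℝ) < s := hs
      have : max (s - x ^ 2) 0 / s = max (1 - x ^ 2 / s) 0 := by
        rw [← max_div_div_right hs'.le, zero_div]
        congr 1
        field_simp
      rw [← this, Real.div_rpow (le_max_right _ _) hs'.le,
        div_mul_cancel₀ _ (by positivity : s ^ a ≠ 0)]
    · intro s hs
      simp only [Set.mem_Ioi, not_lt] at hs
      have : max (s - x ^ 2) 0 = 0 := max_eq_right (by nlinarith [sq_nonneg x])
      rw [this, Real.zero_rpow ha.ne', zero_mul]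
  rw [h1, ← integral_add_right_eq_self
    (fun s : ℝ => max (s - x ^ 2) 0 ^ a * Real.exp (-s / 4)) (x ^ 2)]
  have h2 : ∀ t : ℝ, max (t + x ^ 2 - x ^ 2) 0 ^ a * Real.exp (-(t + x ^ 2) / 4)
      = Real.exp (-x ^ 2 / 4) * (max t 0 ^ a * Real.exp (-(1 / 4 * t))) := by
    intro t
    rw [add_sub_cancel_right]
    rw [show -(t + x ^ 2) / 4 = -(1 / 4 * t) + -x ^ 2 / 4 by ring, Real.exp_add]
    ring
  simp only [h2]
  rw [integral_const_mul]
  have h3 : ∫ t : ℝ, max t 0 ^ a * Real.exp (-(1 / 4 * t))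
      = ∫ t in Set.Ioi (0 : ℝ), t ^ ((a + 1) - 1) * Real.exp (-(1 / 4 * t)) := by
    rw [← setIntegral_eq_integral_of_forall_compl_eq_zero
      (f := fun t : ℝ => max t 0 ^ a * Real.exp (-(1 / 4 * t))) (s := Set.Ioi 0)]
    · refine setIntegral_congr_fun measurableSet_Ioi fun t ht => ?_
      rw [max_eq_left (le_of_lt ht), add_sub_cancel_right]
    · intro t ht
      simp only [Set.mem_Ioi, not_lt] at ht
      rw [max_eq_right ht, Real.zero_rpow ha.ne', zero_mul]
  rw [h3, integral_rpow_mul_exp_neg_mul_Ioi (by linarith) (by norm_num : (0:ℝ) < 1/4)]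
  norm_num
  ring
end

section
/- For every real number a > 0 and every ξ ∈ ℝ, the integral over s ∈ (0,∞) of 𝓕g_a(√s · ξ) · s^{a + 1/2} · e^{-s/4} ds equals 2√π · 4^{a+1} · Γ(a+1) · e^{-4π²ξ²}. -/
/-!
For `s > 0` the substitution `t ↦ √s t` turns `𝓕g_a(√s ξ) s^{a+1/2}` into the Fourier transform
at `ξ` of `t ↦ (s - t²)₊^a`. After exchanging the `s`- and `t`-integrals, the inner integral
`∫₀^∞ (s - t²)₊^a e^{-s/4} ds` is a Gamma integral shifted by `t²`, namely
`4^{a+1} Γ(a+1) e^{-t²/4}`, and the Fourier transform of this Gaussian is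
`4^{a+1} Γ(a+1) · 2√π e^{-4π²ξ²}`.
-/

open MeasureTheory Real FourierTransform Set

section Fourier

variable {E : Type*} [NormedAddCommGroup E] [NormedSpace ℂ E]

theorem Real.fourier_comp_div (f : ℝ → E) {c : ℝ} (hc : c ≠ 0) (ξ : ℝ) :
    𝓕 (fun t ↦ f (t / c)) ξ = |c| • 𝓕 f (c * ξ) := by
  simp_rw [fourier_real_eq_integral_exp_smul]
  rw [← Measure.integral_comp_div _ c]
  congr 1 with t
  congr 4
  field_simp

theorem Real.fourier_const_smul (f : ℝ → E) (r : ℂ) (ξ : ℝ) :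
    𝓕 (fun t ↦ r • f t) ξ = r • 𝓕 f ξ :=
  congrFun (VectorFourier.fourierIntegral_const_smul _ _ _ f r) ξ

theorem Real.integral_fourier_eq_fourier_integral [CompleteSpace E] {X : Type*}
    [MeasurableSpace X] {μ : Measure X} [SFinite μ] {K : X → ℝ → E}
    (hK : Integrable (Function.uncurry K) (μ.prod volume)) (ξ : ℝ) :
    ∫ x, 𝓕 (K x) ξ ∂μ = 𝓕 (fun t ↦ ∫ x, K x t ∂μ) ξ := by
  simp only [fourier_real_eq_integral_exp_smul, ← integral_smul]
  refine integral_integral_swap (hK.mono ?_ (.of_forall fun p ↦ ?_))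
  · have : Measurable fun p : X × ℝ ↦ Complex.exp (↑(-2 * π * p.2 * ξ) * Complex.I) := by
      fun_prop
    exact this.aestronglyMeasurable.smul hK.aestronglyMeasurable
  · simp only [Function.uncurry, norm_smul, Complex.norm_exp_ofReal_mul_I, one_mul, le_refl]

end Fourier

theorem Real.fourier_exp_neg_mul_sq {b : ℝ} (hb : 0 < b) (ξ : ℝ) :
    𝓕 (fun t : ℝ ↦ (rexp (-b * t ^ 2) : ℂ)) ξ = (√(π / b) * rexp (-π ^ 2 * ξ ^ 2 / b) : ℝ) := by
  have h := congrFun (fourier_gaussian_pi (b := (b / π : ℂ)) (by simp; positivity)) ξ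
  have hroot : ((b : ℂ) / π) ^ (1 / 2 : ℂ) = ((√(b / π) : ℝ) : ℂ) := by
    rw [sqrt_eq_rpow, Complex.ofReal_cpow (by positivity)]
    push_cast
    ring_nf
  rw [hroot] at h
  convert h using 2
  · ext t
    push_cast
    congr 1
    field_simp
  · push_cast
    congr 1
    · rw [one_div, ← Complex.ofReal_inv, ← sqrt_inv, inv_div]
    · congr 1
      field_simp

theorem max_rpow_eq_zero {x a : ℝ} (hx : x ≤ 0) (ha : a ≠ 0) : (max x 0) ^ a = 0 := by
  rw [max_eq_right hx, zero_rpow ha]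

theorem max_sub_sq_rpow_eq {s : ℝ} (hs : 0 < s) (a t : ℝ) :
    (max (s - t ^ 2) 0) ^ a = s ^ a * (max (1 - (t / √s) ^ 2) 0) ^ a := by
  rw [← mul_rpow hs.le (le_max_right _ _), mul_max_of_nonneg _ _ hs.le, mul_zero, div_pow,
    sq_sqrt hs.le, mul_sub, mul_one, mul_div_cancel₀ _ hs.ne']

theorem fourier_max_sub_sq_rpow (a : ℝ) {s : ℝ} (hs : 0 < s) (ξ : ℝ) :
    𝓕 (fun t : ℝ ↦ (((max (s - t ^ 2) 0) ^ a : ℝ) : ℂ)) ξ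
      = ((s ^ (a + 1 / 2) : ℝ) : ℂ)
          * 𝓕 (fun t : ℝ ↦ (((max (1 - t ^ 2) 0) ^ a : ℝ) : ℂ)) (√s * ξ) := by
  have hroot : 0 < √s := sqrt_pos.2 hs
  simp_rw [max_sub_sq_rpow_eq hs, Complex.ofReal_mul, ← smul_eq_mul (a := ((s ^ a : ℝ) : ℂ))]
  rw [fourier_const_smul, fourier_comp_div (fun t : ℝ ↦ (((max (1 - t ^ 2) 0) ^ a : ℝ) : ℂ))
    hroot.ne', abs_of_pos hroot, rpow_add hs, ← sqrt_eq_rpow, Complex.real_smul, smul_eq_mul]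
  push_cast
  ring

theorem integral_Ioi_max_sub_rpow_mul_exp_neg_mul {a b c : ℝ} (ha : 0 < a) (hb : 0 < b)
    (hc : 0 ≤ c) :
    ∫ s in Ioi 0, (max (s - c) 0) ^ a * rexp (-(b * s))
      = (1 / b) ^ (a + 1) * Gamma (a + 1) * rexp (-(b * c)) := by
  set f : ℝ → ℝ := fun s ↦ (max (s - c) 0) ^ a * rexp (-(b * s))
  have hf : ∀ s ≤ c, f s = 0 := fun s hs ↦ by
    simp only [f, max_rpow_eq_zero (sub_nonpos.2 hs) ha.ne', zero_mul]
  calc ∫ s in Ioi 0, f s = ∫ s, f s :=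
        setIntegral_eq_integral_of_forall_compl_eq_zero fun s hs ↦ hf s (by simp at hs; linarith)
    _ = ∫ u, f (u + c) := (integral_add_right_eq_self f c).symm
    _ = ∫ u in Ioi 0, f (u + c) :=
        (setIntegral_eq_integral_of_forall_compl_eq_zero fun u hu ↦
          hf _ (by simp at hu; linarith)).symm
    _ = ∫ u in Ioi 0, rexp (-(b * c)) * (u ^ (a + 1 - 1) * rexp (-(b * u))) := by
        refine setIntegral_congr_fun measurableSet_Ioi fun u hu ↦ ?_
        simp only [f, add_sub_cancel_right, max_eq_left (mem_Ioi.1 hu).le]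
        rw [mul_left_comm, ← exp_add]
        ring_nf
    _ = _ := by
        rw [integral_const_mul, integral_rpow_mul_exp_neg_mul_Ioi (by linarith) hb]
        ring

theorem integrable_uncurry_max_sub_sq_rpow_mul_exp_neg_mul {a b : ℝ} (ha : 0 < a)
    (hb : 0 < b) :
    Integrable (Function.uncurry fun s t : ℝ ↦ (max (s - t ^ 2) 0) ^ a * rexp (-(b * s)))
      ((volume.restrict (Ioi 0)).prod volume) := by
  have hint t := integral_Ioi_max_sub_rpow_mul_exp_neg_mul ha hb (sq_nonneg t)
  have hcont :
      Continuous (Function.uncurry fun s t : ℝ ↦ (max (s - t ^ 2) 0) ^ a * rexp (-(b * s))) := by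
    fun_prop (disch := exact ha.le)
  refine (integrable_prod_iff' hcont.aestronglyMeasurable).2 ⟨.of_forall fun t ↦ ?_, ?_⟩
  · exact .of_integral_ne_zero (by simp only [Function.uncurry_apply_pair, hint t]; positivity)
  · have hnorm t : ∫ s in Ioi 0, ‖(max (s - t ^ 2) 0) ^ a * rexp (-(b * s))‖
        = (1 / b) ^ (a + 1) * Gamma (a + 1) * rexp (-b * t ^ 2) := by
      rw [neg_mul, ← hint t]
      exact integral_congr_ae (.of_forall fun s ↦ norm_of_nonneg (by positivity))
    simpa only [Function.uncurry_apply_pair, hnorm] using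
      (integrable_exp_neg_mul_sq hb).const_mul _

/-- Fourier transform of the subordination identity: for `a > 0` and `ξ ∈ ℝ`,
`∫₀^∞ 𝓕g_a(√s ξ) s^{a+1/2} e^{-s/4} ds = 2√π 4^{a+1} Γ(a+1) e^{-4π²ξ²}`,
where `g_a(t) = (max (1 - t²) 0)^a`. -/
theorem fourier_subordination_identity (a : ℝ) (ha : 0 < a) (ξ : ℝ) :
    ∫ s in Set.Ioi (0 : ℝ),
        FourierTransform.fourier (fun t : ℝ => (((max (1 - t ^ 2) 0) ^ a : ℝ) : ℂ))
            (Real.sqrt s * ξ)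
          * ((s ^ (a + 1 / 2) : ℝ) : ℂ) * Complex.exp (-(s : ℂ) / 4)
      = ((2 * Real.sqrt π * 4 ^ (a + 1) * Real.Gamma (a + 1)
          * Real.exp (-4 * π ^ 2 * ξ ^ 2) : ℝ) : ℂ) := by
  let K : ℝ → ℝ → ℂ := fun s t ↦ (((max (s - t ^ 2) 0) ^ a * rexp (-(1 / 4 * s)) : ℝ) : ℂ)
  have hK : Integrable (Function.uncurry K) ((volume.restrict (Ioi 0)).prod volume) :=
    (integrable_uncurry_max_sub_sq_rpow_mul_exp_neg_mul ha (by norm_num)).ofReal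
  have hscale (s : ℝ) (hs : s ∈ Ioi 0) :
      𝓕 (fun t : ℝ ↦ (((max (1 - t ^ 2) 0) ^ a : ℝ) : ℂ)) (√s * ξ)
          * ((s ^ (a + 1 / 2) : ℝ) : ℂ) * Complex.exp (-(s : ℂ) / 4) = 𝓕 (K s) ξ := by
    simp only [K, Complex.ofReal_mul, mul_comm _ (Complex.ofReal (rexp _)),
      ← smul_eq_mul (a := Complex.ofReal (rexp _))]
    rw [fourier_const_smul, fourier_max_sub_sq_rpow a hs, smul_eq_mul, Complex.ofReal_exp]
    push_cast
    ring_nf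
  have hsubord (t : ℝ) : ∫ s in Ioi 0, K s t
      = ((4 ^ (a + 1) * Gamma (a + 1) : ℝ) : ℂ) • (rexp (-(1 / 4) * t ^ 2) : ℂ) := by
    rw [integral_complex_ofReal,
      integral_Ioi_max_sub_rpow_mul_exp_neg_mul ha (by norm_num) (sq_nonneg t)]
    push_cast
    ring_nf
  calc _ = ∫ s in Ioi 0, 𝓕 (K s) ξ := setIntegral_congr_fun measurableSet_Ioi hscale
    _ = 𝓕 (fun t ↦ ∫ s in Ioi 0, K s t) ξ := integral_fourier_eq_fourier_integral hK ξ
    _ = ((4 ^ (a + 1) * Gamma (a + 1) : ℝ) : ℂ)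
          • 𝓕 (fun t : ℝ ↦ (rexp (-(1 / 4) * t ^ 2) : ℂ)) ξ := by
        simp_rw [hsubord]
        exact fourier_const_smul _ _ _
    _ = _ := by
        rw [fourier_exp_neg_mul_sq (by norm_num), smul_eq_mul, ← Complex.ofReal_mul,
          show π / (1 / 4) = 2 ^ 2 * π by ring, sqrt_mul (by norm_num), sqrt_sq (by norm_num),
          show -π ^ 2 * ξ ^ 2 / (1 / 4) = -4 * π ^ 2 * ξ ^ 2 by ring]
        ring_nf
end

section
/- For every real number a > 0 there exists a constant C > 0 such that |𝓕g_a(ξ)| ≤ C · (1 + |ξ|)^{-(a+1)} for all ξ ∈ ℝ. -/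
/-!
For `ξ ≥ 1`, Cauchy's theorem moves the integral `∫_{-1}^{1} (1 - t²)^a e^{-2πitξ} dt` onto the
two vertical rays `±1 - iy`, `y > 0` (the bottom side of the rectangle `[-1, 1] × [-R, 0]` dies as
`R → ∞` because of the factor `e^{-2πξR}`). On these rays `|1 - z²| = y √(y² + 4)` vanishes at
`y = 0`, so the integrand is bounded by `3^a (y^a + y^{2a}) e^{-2πξy}`, whose integral is
`O(ξ^{-(a+1)})` by the Gamma integral. Evenness handles `ξ ≤ -1`, and `|𝓕g_a| ≤ ‖g_a‖₁ ≤ 2`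
handles `|ξ| ≤ 1`.
-/

open MeasureTheory Real Set Filter Topology
open scoped FourierTransform

namespace Complex

theorem re_one_sub_sq (z : ℂ) : (1 - z ^ 2).re = 1 - z.re ^ 2 + z.im ^ 2 := by
  simp only [sub_re, one_re, sq, mul_re]
  ring

theorem intervalIntegral_eq_add_integral_vertical_segments {f : ℂ → ℂ} {a b R : ℝ} (hab : a ≤ b)
    (hR : 0 ≤ R) (hc : ContinuousOn f (Icc a b ×ℂ Icc (-R) 0))
    (hd : DifferentiableOn ℂ f (Ioo a b ×ℂ Ioo (-R) 0)) :
    ∫ x in a..b, f x = (∫ x in a..b, f (x - R * I)) +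
      I * (∫ y in 0..R, f (b - y * I)) - I * ∫ y in 0..R, f (a - y * I) := by
  have hrect := integral_boundary_rect_eq_zero_of_continuousOn_of_differentiableOn f ⟨a, -R⟩ ⟨b, 0⟩
    (by rwa [uIcc_of_le hab, uIcc_of_le (by linarith)])
    (by rwa [min_eq_left hab, max_eq_right hab, min_eq_left (by linarith),
      max_eq_right (by linarith)])
  have hflip (c : ℝ) : ∫ y in 0..R, f (c - y * I) = ∫ y in -R..0, f (c + y * I) := by
    simpa [sub_eq_add_neg] using
      intervalIntegral.integral_comp_neg (fun y : ℝ => f (c + y * I)) (a := 0) (b := R)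
  simp only [hflip, smul_eq_mul] at hrect ⊢
  push_cast at hrect ⊢
  simp only [zero_mul, add_zero, sub_eq_add_neg, neg_mul] at hrect ⊢
  linear_combination -hrect

theorem intervalIntegral_eq_sub_integral_vertical_rays {f : ℂ → ℂ} {a b : ℝ} (hab : a ≤ b)
    (hc : ContinuousOn f (Icc a b ×ℂ Iic 0)) (hd : DifferentiableOn ℂ f (Ioo a b ×ℂ Iio 0))
    (hbot : Tendsto (fun R : ℝ => ∫ x in a..b, f (x - R * I)) atTop (𝓝 0))
    (ha : IntegrableOn (fun y : ℝ => f (a - y * I)) (Ioi 0))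
    (hb : IntegrableOn (fun y : ℝ => f (b - y * I)) (Ioi 0)) :
    ∫ x in a..b, f x =
      I * (∫ y : ℝ in Ioi 0, f (b - y * I)) - I * ∫ y : ℝ in Ioi 0, f (a - y * I) := by
  have hlim : Tendsto (fun R : ℝ => (∫ x in a..b, f (x - R * I)) +
      I * (∫ y in 0..R, f (b - y * I)) - I * ∫ y in 0..R, f (a - y * I)) atTop
      (𝓝 (0 + I * (∫ y : ℝ in Ioi 0, f (b - y * I)) - I * ∫ y : ℝ in Ioi 0, f (a - y * I))) :=
    (hbot.add ((intervalIntegral_tendsto_integral_Ioi 0 hb tendsto_id).const_mul I)).sub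
      ((intervalIntegral_tendsto_integral_Ioi 0 ha tendsto_id).const_mul I)
  rw [zero_add] at hlim
  refine tendsto_nhds_unique tendsto_const_nhds (hlim.congr' ?_)
  filter_upwards [eventually_ge_atTop 0] with R hR
  exact (intervalIntegral_eq_add_integral_vertical_segments hab hR
    (hc.mono (reProdIm_subset_iff.mpr (prod_mono le_rfl Icc_subset_Iic_self)))
    (hd.mono (reProdIm_subset_iff.mpr (prod_mono le_rfl Ioo_subset_Iio_self)))).symm

end Complex

section RpowMulExp

variable {a r : ℝ}

theorem integrableOn_rpow_mul_exp_neg_mul {s : ℝ} (hs : -1 < s) (hr : 0 < r) :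
    IntegrableOn (fun y : ℝ => y ^ s * Real.exp (-(r * y))) (Ioi 0) := by
  simpa using integrableOn_rpow_mul_exp_neg_mul_rpow hs one_pos hr

theorem integral_rpow_mul_exp_neg_mul_Ioi' {s : ℝ} (hs : -1 < s) (hr : 0 < r) :
    ∫ y in Ioi 0, y ^ s * Real.exp (-(r * y)) = Gamma (s + 1) * r ^ (-(s + 1)) := by
  have h := integral_rpow_mul_exp_neg_mul_Ioi (show 0 < s + 1 by linarith) hr
  rw [add_sub_cancel_right] at h
  rw [h, one_div, inv_rpow hr.le, ← rpow_neg hr.le, mul_comm]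

theorem integrableOn_rpow_add_rpow_mul_exp_neg_mul (ha : 0 ≤ a) (hr : 0 < r) :
    IntegrableOn (fun y : ℝ => (y ^ a + y ^ (2 * a)) * Real.exp (-(r * y))) (Ioi 0) := by
  simp only [add_mul]
  exact (integrableOn_rpow_mul_exp_neg_mul (by linarith) hr).add
    (integrableOn_rpow_mul_exp_neg_mul (by linarith) hr)

theorem integral_rpow_add_rpow_mul_exp_neg_mul_le (ha : 0 ≤ a) (hr : 1 ≤ r) :
    ∫ y in Ioi 0, (y ^ a + y ^ (2 * a)) * Real.exp (-(r * y))
      ≤ (Gamma (a + 1) + Gamma (2 * a + 1)) * r ^ (-(a + 1)) := by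
  have hr0 : 0 < r := by linarith
  simp only [add_mul]
  rw [integral_add (integrableOn_rpow_mul_exp_neg_mul (by linarith) hr0)
    (integrableOn_rpow_mul_exp_neg_mul (by linarith) hr0),
    integral_rpow_mul_exp_neg_mul_Ioi' (by linarith) hr0,
    integral_rpow_mul_exp_neg_mul_Ioi' (by linarith) hr0]
  have : r ^ (-(2 * a + 1)) ≤ r ^ (-(a + 1)) := rpow_le_rpow_of_exponent_le hr (by linarith)
  have : 0 ≤ Gamma (2 * a + 1) := (Gamma_pos_of_pos (by linarith)).le
  nlinarith

end RpowMulExp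

theorem exists_le_mul_one_add_abs_rpow_neg {u : ℝ → ℝ} {b M K : ℝ} (hb : 0 ≤ b)
    (hM : ∀ ξ, u ξ ≤ M) (hK : ∀ ξ, 1 ≤ |ξ| → u ξ ≤ K * |ξ| ^ (-b)) :
    ∃ C > 0, ∀ ξ, u ξ ≤ C * (1 + |ξ|) ^ (-b) := by
  set L := max (max M K) 1
  refine ⟨2 ^ b * L, by positivity, fun ξ => ?_⟩
  have hL : 0 < L := lt_max_of_lt_right one_pos
  have hdecay : (max 1 |ξ|) ^ (-b) ≤ 2 ^ b * (1 + |ξ|) ^ (-b) := by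
    have hmid : (1 + |ξ|) / 2 ≤ max 1 |ξ| := by
      linarith [le_max_left 1 |ξ|, le_max_right 1 |ξ|]
    calc (max 1 |ξ|) ^ (-b) ≤ ((1 + |ξ|) / 2) ^ (-b) :=
          rpow_le_rpow_of_nonpos (by positivity) hmid (by linarith)
      _ = 2 ^ b * (1 + |ξ|) ^ (-b) := by
          rw [div_rpow (by positivity) zero_le_two, rpow_neg zero_le_two, div_inv_eq_mul, mul_comm]
  have hu : u ξ ≤ L * (max 1 |ξ|) ^ (-b) := by
    rcases le_total |ξ| 1 with h | h
    · rw [max_eq_left h, one_rpow, mul_one]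
      exact (hM ξ).trans ((le_max_left _ _).trans (le_max_left _ _))
    · rw [max_eq_right h]
      exact (hK ξ h).trans (mul_le_mul_of_nonneg_right ((le_max_right _ _).trans (le_max_left _ _))
        (by positivity))
  calc u ξ ≤ L * (max 1 |ξ|) ^ (-b) := hu
    _ ≤ L * (2 ^ b * (1 + |ξ|) ^ (-b)) := mul_le_mul_of_nonneg_left hdecay hL.le
    _ = 2 ^ b * L * (1 + |ξ|) ^ (-b) := by ring

noncomputable def bochnerRieszKernel (a t : ℝ) : ℂ := ((max (1 - t ^ 2) 0 ^ a : ℝ) : ℂ)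

/-- The holomorphic extension of `t ↦ bochnerRieszKernel a t * e^{-2πitξ}` from `(-1, 1)`. -/
noncomputable def bochnerRieszIntegrand (a ξ : ℝ) (z : ℂ) : ℂ :=
  (1 - z ^ 2) ^ (a : ℂ) * Complex.exp (-2 * π * Complex.I * ξ * z)

section BochnerRiesz

variable {a ξ : ℝ}

theorem norm_bochnerRieszIntegrand (z : ℂ) :
    ‖bochnerRieszIntegrand a ξ z‖ = ‖1 - z ^ 2‖ ^ a * Real.exp (2 * π * ξ * z.im) := by
  simp [bochnerRieszIntegrand, Complex.norm_exp, Complex.norm_cpow_real, Complex.mul_re]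

theorem bochnerRieszIntegrand_neg (z : ℂ) :
    bochnerRieszIntegrand a ξ (-z) = bochnerRieszIntegrand a (-ξ) z := by
  simp only [bochnerRieszIntegrand, neg_sq, Complex.ofReal_neg, mul_neg, neg_mul]

theorem continuousOn_bochnerRieszIntegrand (ha : 0 < a) :
    ContinuousOn (bochnerRieszIntegrand a ξ) (Complex.re ⁻¹' Icc (-1) 1) := by
  intro z hz
  have hre : 0 ≤ (1 - z ^ 2).re := by
    have : z.re ^ 2 ≤ 1 := sq_le_one_iff_abs_le_one _ |>.mpr (abs_le.mpr hz)
    rw [Complex.re_one_sub_sq]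
    nlinarith [sq_nonneg z.im]
  refine ContinuousAt.continuousWithinAt (ContinuousAt.mul ?_ (by fun_prop))
  exact (Complex.continuousAt_cpow_const_of_re_pos (Or.inl hre) (by simpa using ha)).comp
    (f := fun w : ℂ => 1 - w ^ 2) (by fun_prop)

theorem differentiableOn_bochnerRieszIntegrand :
    DifferentiableOn ℂ (bochnerRieszIntegrand a ξ) (Complex.re ⁻¹' Ioo (-1) 1) := by
  intro z hz
  have hre : 0 < (1 - z ^ 2).re := by
    have : z.re ^ 2 < 1 := sq_lt_one_iff_abs_lt_one _ |>.mpr (abs_lt.mpr hz)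
    rw [Complex.re_one_sub_sq]
    nlinarith [sq_nonneg z.im]
  refine DifferentiableAt.differentiableWithinAt (DifferentiableAt.mul ?_ (by fun_prop))
  exact ((differentiableAt_const _).sub (differentiableAt_id.pow 2)).cpow
    (differentiableAt_const _) (Or.inl hre)

theorem bochnerRieszKernel_eq_zero (ha : 0 < a) {t : ℝ} (ht : t ∉ Ioc (-1) 1) :
    bochnerRieszKernel a t = 0 := by
  have h : 1 - t ^ 2 ≤ 0 := by
    rw [mem_Ioc, not_and_or, not_lt, not_le] at ht
    rcases ht with ht | ht <;> nlinarith
  rw [bochnerRieszKernel, max_eq_right h, Real.zero_rpow ha.ne', Complex.ofReal_zero]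

theorem fourier_bochnerRieszKernel_eq_intervalIntegral (ha : 0 < a) (ξ : ℝ) :
    𝓕 (bochnerRieszKernel a) ξ = ∫ x in (-1)..1, bochnerRieszIntegrand a ξ x := by
  rw [Real.fourier_real_eq_integral_exp_smul, intervalIntegral.integral_of_le (by norm_num),
    ← setIntegral_eq_integral_of_forall_compl_eq_zero (s := Ioc (-1) 1)
      fun t ht => by rw [bochnerRieszKernel_eq_zero ha ht, smul_zero]]
  refine setIntegral_congr_fun measurableSet_Ioc fun t ht => ?_
  have h : 0 ≤ 1 - t ^ 2 := by nlinarith [ht.1, ht.2]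
  rw [bochnerRieszKernel, bochnerRieszIntegrand, max_eq_left h, Complex.ofReal_cpow h, smul_eq_mul,
    mul_comm]
  push_cast
  ring_nf

theorem norm_fourier_bochnerRieszKernel_le_two (ha : 0 < a) (ξ : ℝ) :
    ‖𝓕 (bochnerRieszKernel a) ξ‖ ≤ 2 := by
  rw [fourier_bochnerRieszKernel_eq_intervalIntegral ha]
  refine (intervalIntegral.norm_integral_le_of_norm_le_const (C := 1) fun x hx => ?_).trans_eq
    (by norm_num)
  rw [uIoc_of_le (by norm_num)] at hx
  have h : ‖1 - (x : ℂ) ^ 2‖ ≤ 1 := by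
    norm_cast
    rw [Real.norm_eq_abs, abs_le]
    constructor <;> nlinarith [hx.1, hx.2]
  rw [norm_bochnerRieszIntegrand, Complex.ofReal_im, mul_zero, Real.exp_zero, mul_one]
  exact rpow_le_one (norm_nonneg _) h ha.le

theorem fourier_bochnerRieszKernel_neg (ha : 0 < a) (ξ : ℝ) :
    𝓕 (bochnerRieszKernel a) (-ξ) = 𝓕 (bochnerRieszKernel a) ξ := by
  simp_rw [fourier_bochnerRieszKernel_eq_intervalIntegral ha, ← bochnerRieszIntegrand_neg,
    ← Complex.ofReal_neg]
  simpa using intervalIntegral.integral_comp_neg (a := -1) (b := 1)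
    (fun x : ℝ => bochnerRieszIntegrand a ξ x)

theorem rpow_sq_add_two_mul_le (ha : 0 ≤ a) {y : ℝ} (hy : 0 ≤ y) :
    (y ^ 2 + 2 * y) ^ a ≤ 3 ^ a * (y ^ a + y ^ (2 * a)) := by
  rcases le_total y 1 with h | h
  · calc (y ^ 2 + 2 * y) ^ a ≤ (3 * y) ^ a := by gcongr; nlinarith
      _ = 3 ^ a * y ^ a := mul_rpow (by norm_num) hy
      _ ≤ 3 ^ a * (y ^ a + y ^ (2 * a)) := by gcongr; exact le_add_of_nonneg_right (by positivity)
  · calc (y ^ 2 + 2 * y) ^ a ≤ (3 * y ^ 2) ^ a := by gcongr; nlinarith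
      _ = 3 ^ a * y ^ (2 * a) := by
        rw [mul_rpow (by norm_num) (by positivity), rpow_mul hy, rpow_two]
      _ ≤ 3 ^ a * (y ^ a + y ^ (2 * a)) := by gcongr; exact le_add_of_nonneg_left (by positivity)

theorem norm_one_sub_sq_sub_mul_I_le {c y : ℝ} (hc : |c| = 1) (hy : 0 ≤ y) :
    ‖1 - ((c : ℂ) - y * Complex.I) ^ 2‖ ≤ y ^ 2 + 2 * y := by
  have hc2 : (c : ℂ) ^ 2 = 1 := by exact_mod_cast (sq_abs c).symm.trans (by rw [hc, one_pow])
  have h : 1 - ((c : ℂ) - y * Complex.I) ^ 2 = (y ^ 2 : ℝ) + (2 * c * y : ℝ) * Complex.I := by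
    push_cast
    linear_combination (-(y : ℂ) ^ 2) * Complex.I_sq - hc2
  rw [h]
  refine (norm_add_le _ _).trans_eq ?_
  simp [hc, abs_of_nonneg hy]

theorem norm_bochnerRieszIntegrand_sub_mul_I_le_of_abs_eq_one (ha : 0 ≤ a) {c y : ℝ} (hc : |c| = 1)
    (hy : 0 ≤ y) :
    ‖bochnerRieszIntegrand a ξ (c - y * Complex.I)‖
      ≤ 3 ^ a * (y ^ a + y ^ (2 * a)) * Real.exp (-(2 * π * ξ * y)) := by
  have him : 2 * π * ξ * (c - y * Complex.I).im = -(2 * π * ξ * y) := by simp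
  rw [norm_bochnerRieszIntegrand, him]
  refine mul_le_mul_of_nonneg_right ?_ (exp_nonneg _)
  exact (rpow_le_rpow (norm_nonneg _) (norm_one_sub_sq_sub_mul_I_le hc hy) ha).trans
    (rpow_sq_add_two_mul_le ha hy)

theorem norm_bochnerRieszIntegrand_sub_mul_I_le_of_abs_le_one (ha : 0 ≤ a) {x R : ℝ} (hx : |x| ≤ 1)
    (hR : 0 ≤ R) :
    ‖bochnerRieszIntegrand a ξ (x - R * Complex.I)‖
      ≤ (2 + R) ^ (2 * a) * Real.exp (-(2 * π * ξ * R)) := by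
  have him : 2 * π * ξ * (x - R * Complex.I).im = -(2 * π * ξ * R) := by simp
  have hz : ‖(x : ℂ) - R * Complex.I‖ ≤ 1 + R := by
    refine (norm_sub_le _ _).trans ?_
    simp [abs_of_nonneg hR, hx]
  have h : ‖1 - ((x : ℂ) - R * Complex.I) ^ 2‖ ≤ (2 + R) ^ 2 := by
    refine (norm_sub_le _ _).trans ?_
    rw [norm_one, norm_pow]
    nlinarith [norm_nonneg ((x : ℂ) - R * Complex.I)]
  rw [norm_bochnerRieszIntegrand, him, rpow_mul (by linarith), rpow_two]
  exact mul_le_mul_of_nonneg_right (rpow_le_rpow (norm_nonneg _) h ha) (exp_nonneg _)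

theorem tendsto_integral_bochnerRieszIntegrand_sub_mul_I (ha : 0 ≤ a) (hξ : 0 < ξ) :
    Tendsto (fun R : ℝ => ∫ x in (-1)..1, bochnerRieszIntegrand a ξ (x - R * Complex.I))
      atTop (𝓝 0) := by
  set c := 2 * π * ξ
  have hc : 0 < c := by positivity
  have hlim : Tendsto (fun R : ℝ => (2 + R) ^ (2 * a) * Real.exp (-(c * R))) atTop (𝓝 0) := by
    have h := ((tendsto_rpow_mul_exp_neg_mul_atTop_nhds_zero (2 * a) c hc).comp
      (tendsto_atTop_add_const_left _ 2 tendsto_id)).const_mul (Real.exp (2 * c))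
    rw [mul_zero] at h
    refine h.congr fun R => ?_
    simp only [Function.comp_apply, id]
    rw [mul_left_comm, ← Real.exp_add]
    ring_nf
  refine squeeze_zero_norm' ?_ (by simpa using hlim.mul_const 2)
  filter_upwards [eventually_ge_atTop 0] with R hR
  refine (intervalIntegral.norm_integral_le_of_norm_le_const
    (C := (2 + R) ^ (2 * a) * Real.exp (-(c * R))) fun x hx => ?_).trans_eq (by norm_num)
  rw [uIoc_of_le (by norm_num)] at hx
  exact norm_bochnerRieszIntegrand_sub_mul_I_le_of_abs_le_one ha (abs_le.mpr ⟨hx.1.le, hx.2⟩) hR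

theorem integrableOn_bochnerRieszIntegrand_sub_mul_I (ha : 0 < a) (hξ : 0 < ξ) {c : ℝ}
    (hc : |c| = 1) :
    IntegrableOn (fun y : ℝ => bochnerRieszIntegrand a ξ (c - y * Complex.I)) (Ioi 0) := by
  have hcont : Continuous fun y : ℝ => bochnerRieszIntegrand a ξ (c - y * Complex.I) :=
    (continuousOn_bochnerRieszIntegrand ha).comp_continuous (by fun_prop) fun y => by
      simp [abs_le.mp hc.le]
  have hr : 0 < 2 * π * ξ := by positivity
  refine ((integrableOn_rpow_add_rpow_mul_exp_neg_mul ha.le hr).const_mul (3 ^ a)).mono'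
    hcont.aestronglyMeasurable ?_
  filter_upwards [ae_restrict_mem measurableSet_Ioi] with y hy
  rw [← mul_assoc]
  exact norm_bochnerRieszIntegrand_sub_mul_I_le_of_abs_eq_one ha.le hc (le_of_lt hy)

theorem norm_integral_bochnerRieszIntegrand_sub_mul_I_le (ha : 0 < a) (hξ : 1 ≤ 2 * π * ξ)
    {c : ℝ} (hc : |c| = 1) :
    ‖∫ y : ℝ in Ioi 0, bochnerRieszIntegrand a ξ (c - y * Complex.I)‖
      ≤ 3 ^ a * (Gamma (a + 1) + Gamma (2 * a + 1)) * (2 * π * ξ) ^ (-(a + 1)) := by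
  calc ‖∫ y : ℝ in Ioi 0, bochnerRieszIntegrand a ξ (c - y * Complex.I)‖
      ≤ ∫ y : ℝ in Ioi 0, 3 ^ a * ((y ^ a + y ^ (2 * a)) * Real.exp (-(2 * π * ξ * y))) := by
        refine norm_integral_le_of_norm_le ((integrableOn_rpow_add_rpow_mul_exp_neg_mul ha.le
          (by linarith)).const_mul _) ?_
        filter_upwards [ae_restrict_mem measurableSet_Ioi] with y hy
        rw [← mul_assoc]
        exact norm_bochnerRieszIntegrand_sub_mul_I_le_of_abs_eq_one ha.le hc (le_of_lt hy)
    _ ≤ 3 ^ a * ((Gamma (a + 1) + Gamma (2 * a + 1)) * (2 * π * ξ) ^ (-(a + 1))) := by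
        rw [integral_const_mul]
        gcongr
        exact integral_rpow_add_rpow_mul_exp_neg_mul_le ha.le hξ
    _ = _ := by ring

theorem norm_fourier_bochnerRieszKernel_le_of_one_le (ha : 0 < a) (hξ : 1 ≤ ξ) :
    ‖𝓕 (bochnerRieszKernel a) ξ‖
      ≤ 2 * 3 ^ a * (Gamma (a + 1) + Gamma (2 * a + 1)) * ξ ^ (-(a + 1)) := by
  have hξ0 : 0 < ξ := by linarith
  have h2πξ : ξ ≤ 2 * π * ξ := by nlinarith [pi_gt_three]
  rw [fourier_bochnerRieszKernel_eq_intervalIntegral ha,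
    Complex.intervalIntegral_eq_sub_integral_vertical_rays (by norm_num)
      ((continuousOn_bochnerRieszIntegrand ha).mono fun _ hz => hz.1)
      (differentiableOn_bochnerRieszIntegrand.mono fun _ hz => hz.1)
      (tendsto_integral_bochnerRieszIntegrand_sub_mul_I ha.le hξ0)
      (integrableOn_bochnerRieszIntegrand_sub_mul_I ha hξ0 (by norm_num))
      (integrableOn_bochnerRieszIntegrand_sub_mul_I ha hξ0 (by norm_num))]
  calc _ ≤ ‖∫ y : ℝ in Ioi 0, bochnerRieszIntegrand a ξ ((1 : ℝ) - y * Complex.I)‖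
        + ‖∫ y : ℝ in Ioi 0, bochnerRieszIntegrand a ξ ((-1 : ℝ) - y * Complex.I)‖ :=
        (norm_sub_le _ _).trans_eq (by simp)
    _ ≤ 2 * (3 ^ a * (Gamma (a + 1) + Gamma (2 * a + 1)) * (2 * π * ξ) ^ (-(a + 1))) := by
        rw [two_mul]
        exact add_le_add
          (norm_integral_bochnerRieszIntegrand_sub_mul_I_le ha (by linarith) (by norm_num))
          (norm_integral_bochnerRieszIntegrand_sub_mul_I_le ha (by linarith) (by norm_num))
    _ ≤ 2 * 3 ^ a * (Gamma (a + 1) + Gamma (2 * a + 1)) * ξ ^ (-(a + 1)) := by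
        rw [← mul_assoc, mul_assoc 2 (3 ^ a)]
        exact mul_le_mul_of_nonneg_left (rpow_le_rpow_of_nonpos hξ0 h2πξ (by linarith))
          (by positivity)

theorem norm_fourier_bochnerRieszKernel_le_of_one_le_abs (ha : 0 < a) (hξ : 1 ≤ |ξ|) :
    ‖𝓕 (bochnerRieszKernel a) ξ‖
      ≤ 2 * 3 ^ a * (Gamma (a + 1) + Gamma (2 * a + 1)) * |ξ| ^ (-(a + 1)) := by
  rcases le_or_gt 0 ξ with h | h
  · rw [abs_of_nonneg h] at hξ ⊢
    exact norm_fourier_bochnerRieszKernel_le_of_one_le ha hξ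
  · rw [abs_of_neg h] at hξ ⊢
    rw [← fourier_bochnerRieszKernel_neg ha ξ]
    exact norm_fourier_bochnerRieszKernel_le_of_one_le ha hξ

end BochnerRiesz

/-- Bessel-type decay of the Fourier transform of `g_a(t) = (max (1 - t²) 0)^a`:
for `a > 0` there is `C > 0` with `|𝓕g_a(ξ)| ≤ C (1 + |ξ|)^{-(a+1)}` for all `ξ`. -/
theorem fourier_decay_bochner_riesz_kernel (a : ℝ) (ha : 0 < a) :
    ∃ C > 0, ∀ ξ : ℝ,
      ‖FourierTransform.fourier (fun t : ℝ => (((max (1 - t ^ 2) 0) ^ a : ℝ) : ℂ)) ξ‖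
        ≤ C * (1 + |ξ|) ^ (-(a + 1)) :=
  exists_le_mul_one_add_abs_rpow_neg (by linarith) (norm_fourier_bochnerRieszKernel_le_two ha)
    fun _ => norm_fourier_bochnerRieszKernel_le_of_one_le_abs ha
end

section
/- For all real numbers a > 0 and κ ≥ 0 there exists a constant C > 0 such that for every t > 0 and every ξ ∈ ℝ: ∫₀^∞ (1+s)^κ · s^{a + 1/2} · (t² + ξ²t²)^{-(a/2 + 3/4)} · exp(-s/(4t(1+ξ²))) ds ≤ C · (1+t)^κ · (1+ξ²)^{a/2 + κ + 3/4}. -/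
open MeasureTheory Real

/-! With `b = 4t(1 + ξ²)`, the weight bound `(1 + s)^κ ≤ 2^κ (1 + s^κ)` splits the integral into
the Gamma integrals `∫₀^∞ s^q e^{-s/b} ds = b^{q+1} Γ(q+1)` for `q = a + 1/2` and `q = a + 1/2 + κ`,
both at most `(1 + b)^κ b^{a+3/2}` times a Gamma value. Since `b² = 16 (t² + ξ²t²)(1 + ξ²)`, the
prefactor `(t² + ξ²t²)^{-(a/2+3/4)}` turns `b^{a+3/2}` into `16^{a/2+3/4} (1 + ξ²)^{a/2+3/4}`: the
power of `t` cancels exactly. Finally `1 + b ≤ 4 (1 + t)(1 + ξ²)`. -/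

theorem one_add_rpow_le_two_rpow_mul {x κ : ℝ} (hx : 0 ≤ x) (hκ : 0 ≤ κ) :
    (1 + x) ^ κ ≤ 2 ^ κ * (1 + x ^ κ) := by
  have hmax : (max 1 x) ^ κ ≤ 1 + x ^ κ := by
    rcases max_cases 1 x with ⟨h, -⟩ | ⟨h, -⟩ <;> rw [h]
    · simp [rpow_nonneg hx]
    · linarith
  calc (1 + x) ^ κ ≤ (2 * max 1 x) ^ κ :=
        rpow_le_rpow (by positivity) (by linarith [le_max_left 1 x, le_max_right 1 x]) hκ
    _ = 2 ^ κ * (max 1 x) ^ κ := mul_rpow zero_le_two (by positivity)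
    _ ≤ 2 ^ κ * (1 + x ^ κ) := by gcongr

section GammaIntegral

variable {p b : ℝ}

theorem integrableOn_rpow_mul_exp_neg_div (hp : -1 < p) (hb : 0 < b) :
    IntegrableOn (fun s : ℝ => s ^ p * exp (-s / b)) (Set.Ioi 0) := by
  simpa [rpow_one, neg_div, div_eq_inv_mul] using
    integrableOn_rpow_mul_exp_neg_mul_rpow hp zero_lt_one (inv_pos.2 hb)

theorem integral_rpow_mul_exp_neg_div_Ioi (hp : -1 < p) (hb : 0 < b) :
    ∫ s in Set.Ioi (0 : ℝ), s ^ p * exp (-s / b) = b ^ (p + 1) * Gamma (p + 1) := by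
  simpa [neg_div, div_eq_inv_mul] using
    integral_rpow_mul_exp_neg_mul_Ioi (a := p + 1) (by linarith) (inv_pos.2 hb)

theorem integral_one_add_rpow_mul_rpow_mul_exp_neg_div_le {κ : ℝ} (hp : -1 < p) (hκ : 0 ≤ κ)
    (hb : 0 < b) :
    ∫ s in Set.Ioi (0 : ℝ), (1 + s) ^ κ * s ^ p * exp (-s / b)
      ≤ 2 ^ κ * (1 + b) ^ κ * b ^ (p + 1) * (Gamma (p + 1) + Gamma (p + κ + 1)) := by
  have hpκ : -1 < p + κ := by linarith
  have hpointwise : ∀ s ∈ Set.Ioi (0 : ℝ), (1 + s) ^ κ * s ^ p * exp (-s / b)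
      ≤ 2 ^ κ * (s ^ p * exp (-s / b) + s ^ (p + κ) * exp (-s / b)) := by
    intro s (hs : 0 < s)
    calc (1 + s) ^ κ * s ^ p * exp (-s / b)
        ≤ 2 ^ κ * (1 + s ^ κ) * s ^ p * exp (-s / b) := by
          gcongr
          exact one_add_rpow_le_two_rpow_mul hs.le hκ
      _ = 2 ^ κ * (s ^ p * exp (-s / b) + s ^ (p + κ) * exp (-s / b)) := by
          rw [rpow_add hs]; ring
  have hbκ : b ^ κ ≤ (1 + b) ^ κ := rpow_le_rpow hb.le (by linarith) hκ
  have hone : 1 ≤ (1 + b) ^ κ := one_le_rpow (by linarith) hκ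
  calc ∫ s in Set.Ioi (0 : ℝ), (1 + s) ^ κ * s ^ p * exp (-s / b)
      ≤ ∫ s in Set.Ioi (0 : ℝ),
          2 ^ κ * (s ^ p * exp (-s / b) + s ^ (p + κ) * exp (-s / b)) := by
        refine integral_mono_of_nonneg ?_ ?_
          (ae_restrict_of_forall_mem measurableSet_Ioi hpointwise)
        · exact ae_restrict_of_forall_mem measurableSet_Ioi fun s (hs : 0 < s) => by positivity
        · exact ((integrableOn_rpow_mul_exp_neg_div hp hb).add
            (integrableOn_rpow_mul_exp_neg_div hpκ hb)).const_mul _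
    _ = 2 ^ κ * (b ^ (p + 1) * Gamma (p + 1) + b ^ κ * b ^ (p + 1) * Gamma (p + κ + 1)) := by
        rw [integral_const_mul, integral_add (integrableOn_rpow_mul_exp_neg_div hp hb)
          (integrableOn_rpow_mul_exp_neg_div hpκ hb), integral_rpow_mul_exp_neg_div_Ioi hp hb,
          integral_rpow_mul_exp_neg_div_Ioi hpκ hb, ← rpow_add hb]
        ring_nf
    _ ≤ 2 ^ κ * ((1 + b) ^ κ * (b ^ (p + 1) * Gamma (p + 1))
          + (1 + b) ^ κ * (b ^ (p + 1) * Gamma (p + κ + 1))) := by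
        have hΓ : 0 < Gamma (p + 1) := Gamma_pos_of_pos (by linarith)
        have hΓκ : 0 < Gamma (p + κ + 1) := Gamma_pos_of_pos (by linarith)
        rw [mul_assoc (b ^ κ)]
        gcongr 2 ^ κ * (?_ + ?_ * _)
        exact le_mul_of_one_le_left (by positivity) hone
    _ = 2 ^ κ * (1 + b) ^ κ * b ^ (p + 1) * (Gamma (p + 1) + Gamma (p + κ + 1)) := by ring

end GammaIntegral

theorem rpow_neg_mul_rpow_mul_one_add_rpow_le {t ξ r κ : ℝ} (ht : 0 < t) (hκ : 0 ≤ κ) :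
    (t ^ 2 + ξ ^ 2 * t ^ 2) ^ (-r) * (4 * t * (1 + ξ ^ 2)) ^ (2 * r)
        * (1 + 4 * t * (1 + ξ ^ 2)) ^ κ
      ≤ 16 ^ r * 4 ^ κ * (1 + t) ^ κ * (1 + ξ ^ 2) ^ (r + κ) := by
  set X := t ^ 2 + ξ ^ 2 * t ^ 2
  set E := 1 + ξ ^ 2
  have hE : 0 < E := by positivity
  have hX : 0 < X := by positivity
  have hscale : X ^ (-r) * (4 * t * E) ^ (2 * r) = 16 ^ r * E ^ r := by
    rw [rpow_mul (by positivity), rpow_two, show (4 * t * E) ^ 2 = 16 * X * E by ring,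
      mul_rpow (by positivity) hE.le, mul_rpow (by norm_num) hX.le, rpow_neg hX.le]
    field_simp
  have hshift : (1 + 4 * t * E) ^ κ ≤ (4 * (1 + t) * E) ^ κ :=
    rpow_le_rpow (by positivity) (by nlinarith [sq_nonneg ξ]) hκ
  calc X ^ (-r) * (4 * t * E) ^ (2 * r) * (1 + 4 * t * E) ^ κ
      ≤ 16 ^ r * E ^ r * (4 * (1 + t) * E) ^ κ := by rw [hscale]; gcongr
    _ = 16 ^ r * 4 ^ κ * (1 + t) ^ κ * E ^ (r + κ) := by
      rw [mul_rpow (by positivity) hE.le, mul_rpow (by norm_num) (by positivity),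
        rpow_add hE]
      ring

/-- The final quantitative integral estimate in the proof of Theorem 1.1 i):
for `a > 0`, `κ ≥ 0` there is `C > 0` such that for all `t > 0` and `ξ ∈ ℝ`,
`∫₀^∞ (1+s)^κ s^{a+1/2} (t²+ξ²t²)^{-(a/2+3/4)} exp(-s/(4t(1+ξ²))) ds
  ≤ C (1+t)^κ (1+ξ²)^{a/2+κ+3/4}`. -/
theorem wave_propagator_integral_estimate (a κ : ℝ) (ha : 0 < a) (hκ : 0 ≤ κ) :
    ∃ C > 0, ∀ t > (0 : ℝ), ∀ ξ : ℝ,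
      (∫ s in Set.Ioi (0 : ℝ),
          (1 + s) ^ κ * s ^ (a + 1 / 2) * (t ^ 2 + ξ ^ 2 * t ^ 2) ^ (-(a / 2 + 3 / 4))
            * Real.exp (-s / (4 * t * (1 + ξ ^ 2))))
        ≤ C * (1 + t) ^ κ * (1 + ξ ^ 2) ^ (a / 2 + κ + 3 / 4) := by
  set r := a / 2 + 3 / 4
  set Γsum := Gamma (a + 1 / 2 + 1) + Gamma (a + 1 / 2 + κ + 1)
  have hΓsum : 0 < Γsum :=
    add_pos (Gamma_pos_of_pos (by linarith)) (Gamma_pos_of_pos (by linarith))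
  refine ⟨2 ^ κ * Γsum * (16 ^ r * 4 ^ κ), by positivity, fun t (ht : 0 < t) ξ => ?_⟩
  set X := t ^ 2 + ξ ^ 2 * t ^ 2
  set b := 4 * t * (1 + ξ ^ 2)
  calc (∫ s in Set.Ioi (0 : ℝ), (1 + s) ^ κ * s ^ (a + 1 / 2) * X ^ (-r) * exp (-s / b))
      = X ^ (-r) * ∫ s in Set.Ioi (0 : ℝ), (1 + s) ^ κ * s ^ (a + 1 / 2) * exp (-s / b) := by
        rw [← integral_const_mul]; congr 1; funext s; ring
    _ ≤ X ^ (-r) * (2 ^ κ * (1 + b) ^ κ * b ^ (a + 1 / 2 + 1) * Γsum) := by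
        gcongr
        exact integral_one_add_rpow_mul_rpow_mul_exp_neg_div_le (by linarith) hκ (by positivity)
    _ = 2 ^ κ * Γsum * (X ^ (-r) * b ^ (2 * r) * (1 + b) ^ κ) := by
        rw [show a + 1 / 2 + 1 = 2 * r by ring]; ring
    _ ≤ 2 ^ κ * Γsum * (16 ^ r * 4 ^ κ * (1 + t) ^ κ * (1 + ξ ^ 2) ^ (r + κ)) :=
        mul_le_mul_of_nonneg_left (rpow_neg_mul_rpow_mul_one_add_rpow_le ht hκ) (by positivity)
    _ = _ := by rw [show r + κ = a / 2 + κ + 3 / 4 by ring]; ring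
end

section
/- Let (X, d) be a metric space with a Borel measure μ, and let C₀ > 0 and 0 < n₁ ≤ n₂ be real numbers such that μ(B(x,r)) ≤ C₀ r^{n₁} for all x ∈ X and 0 < r ≤ 1, and μ(B(x,r)) ≤ C₀ r^{n₂} for all x ∈ X and r ≥ 1. Then there exists a constant C > 0, depending only on C₀, n₁, n₂, such that for every t > 0, every r > 0, every x ∈ X, and every measurable function p : X × X → ℝ satisfying |p(y,z)| ≤ t^{-n₁/2} exp(-d(y,z)²/(4t)) for all y,z ∈ X, one has ∫_{{y : d(x,y) > r}} |p(x,y)| dμ(y) ≤ C (1+t)^{(n₂-n₁)/2} exp(-r²/(8t)). -/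
open MeasureTheory Real

private lemma aux_term_bound (n₂ : ℝ) (hn₂ : 0 ≤ n₂) (k : ℕ) :
    ((k : ℝ) + 1) ^ n₂ * Real.exp (-(k:ℝ)^2) ≤ Real.exp ((n₂+1)^2) * (1/2 : ℝ)^k := by
  have hk : (0:ℝ) ≤ k := Nat.cast_nonneg k
  have hlog : Real.log ((k:ℝ)+1) ≤ (k:ℝ) := by
    have := Real.log_le_sub_one_of_pos (by positivity : (0:ℝ) < (k:ℝ)+1)
    linarith
  have hlog2 : Real.log 2 ≤ 1 := by
    have := Real.log_le_sub_one_of_pos (by norm_num : (0:ℝ) < 2); linarith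
  have hlog2' : 0 ≤ Real.log 2 := Real.log_nonneg (by norm_num)
  have h1 : ((k:ℝ)+1) ^ n₂ = Real.exp (Real.log ((k:ℝ)+1) * n₂) :=
    Real.rpow_def_of_pos (by positivity) n₂
  have h2 : (1/2 : ℝ)^k = Real.exp (-(Real.log 2)) ^ k := by
    rw [Real.exp_neg, Real.exp_log (by norm_num : (0:ℝ) < 2)]; norm_num
  rw [h1, h2, ← Real.exp_nat_mul, ← Real.exp_add, ← Real.exp_add, Real.exp_le_exp]
  have hmul : Real.log ((k:ℝ)+1) * n₂ ≤ (k:ℝ) * n₂ :=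
    mul_le_mul_of_nonneg_right hlog hn₂
  nlinarith [sq_nonneg ((n₂+1) - (k:ℝ)), mul_nonneg hk hn₂, mul_nonneg hk hlog2']

private lemma aux_tsum_bound (n₂ : ℝ) (hn₂ : 0 ≤ n₂) :
    ∑' k : ℕ, ENNReal.ofReal (((k:ℝ)+1) ^ n₂ * Real.exp (-(k:ℝ)^2))
      ≤ ENNReal.ofReal (Real.exp ((n₂+1)^2) * 2) := by
  have h12 : ENNReal.ofReal (1/2:ℝ) = 2⁻¹ := by
    rw [one_div, ENNReal.ofReal_inv_of_pos two_pos, ENNReal.ofReal_ofNat]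
  calc ∑' k : ℕ, ENNReal.ofReal (((k:ℝ)+1) ^ n₂ * Real.exp (-(k:ℝ)^2))
      ≤ ∑' k : ℕ, ENNReal.ofReal (Real.exp ((n₂+1)^2)) * ENNReal.ofReal ((1/2:ℝ)^k) := by
        refine ENNReal.tsum_le_tsum fun k => ?_
        rw [← ENNReal.ofReal_mul (Real.exp_pos _).le]
        exact ENNReal.ofReal_le_ofReal (aux_term_bound n₂ hn₂ k)
    _ = ENNReal.ofReal (Real.exp ((n₂+1)^2)) * ∑' k : ℕ, (ENNReal.ofReal (1/2:ℝ))^k := by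
        rw [ENNReal.tsum_mul_left]
        congr 1
        exact tsum_congr fun k => ENNReal.ofReal_pow (by norm_num) k
    _ = ENNReal.ofReal (Real.exp ((n₂+1)^2)) * 2 := by
        rw [ENNReal.tsum_geometric, h12, ENNReal.one_sub_inv_two, inv_inv]
    _ = ENNReal.ofReal (Real.exp ((n₂+1)^2) * 2) := by
        rw [ENNReal.ofReal_mul (Real.exp_pos _).le, ENNReal.ofReal_ofNat]

private lemma aux_vol {X : Type*} [MetricSpace X] [MeasurableSpace X]
    (μ : Measure X) (C₀ n₁ n₂ : ℝ) (hC₀ : 0 < C₀) (hn : n₁ ≤ n₂)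
    (hV₁ : ∀ (x : X) (r : ℝ), 0 < r → r ≤ 1 →
      μ (Metric.ball x r) ≤ ENNReal.ofReal (C₀ * r ^ n₁))
    (hV₂ : ∀ (x : X) (r : ℝ), 1 ≤ r →
      μ (Metric.ball x r) ≤ ENNReal.ofReal (C₀ * r ^ n₂))
    (x : X) (ρ : ℝ) (hρ : 0 < ρ) :
    μ (Metric.ball x ρ) ≤ ENNReal.ofReal (C₀ * ρ ^ n₁ * (1 + ρ) ^ (n₂ - n₁)) := by
  rcases le_or_gt ρ 1 with h | h
  · refine (hV₁ x ρ hρ h).trans (ENNReal.ofReal_le_ofReal ?_)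
    have h1 : (1:ℝ) ≤ (1+ρ) ^ (n₂-n₁) := Real.one_le_rpow (by linarith) (by linarith)
    have h0 : (0:ℝ) ≤ C₀ * ρ ^ n₁ := by positivity
    nlinarith
  · refine (hV₂ x ρ h.le).trans (ENNReal.ofReal_le_ofReal ?_)
    have he : ρ ^ n₂ = ρ ^ n₁ * ρ ^ (n₂ - n₁) := by
      rw [← Real.rpow_add hρ]; ring_nf
    rw [he]
    have h2 : ρ ^ (n₂-n₁) ≤ (1+ρ)^(n₂-n₁) :=
      Real.rpow_le_rpow hρ.le (by linarith) (by linarith)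
    have h0 : (0:ℝ) ≤ C₀ * ρ ^ n₁ := by positivity
    calc C₀ * (ρ ^ n₁ * ρ ^ (n₂-n₁)) = (C₀ * ρ ^ n₁) * ρ ^ (n₂-n₁) := by ring
      _ ≤ (C₀ * ρ ^ n₁) * (1+ρ)^(n₂-n₁) := mul_le_mul_of_nonneg_left h2 h0

private lemma aux_gauss {X : Type*} [MetricSpace X] [MeasurableSpace X] [BorelSpace X]
    (μ : Measure X) (C₀ n₁ n₂ : ℝ) (hC₀ : 0 < C₀) (hn₁ : 0 < n₁) (hn : n₁ ≤ n₂)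
    (hV : ∀ (x : X) (ρ : ℝ), 0 < ρ →
      μ (Metric.ball x ρ) ≤ ENNReal.ofReal (C₀ * ρ ^ n₁ * (1 + ρ) ^ (n₂ - n₁)))
    (x : X) (t : ℝ) (ht : 0 < t) :
    ∫⁻ y, ENNReal.ofReal (Real.exp (-(dist x y)^2 / (8*t))) ∂μ
      ≤ ENNReal.ofReal (C₀ * (Real.sqrt (8*t)) ^ n₁ * (1 + Real.sqrt (8*t)) ^ (n₂-n₁)
          * (Real.exp ((n₂+1)^2) * 2)) := by
  set ρ : ℝ := Real.sqrt (8*t) with hρdef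
  have hρ : 0 < ρ := Real.sqrt_pos.mpr (by linarith)
  have hρ2 : ρ^2 = 8*t := Real.sq_sqrt (by linarith)
  set A : ℕ → Set X := fun k => (fun y => dist x y) ⁻¹' Set.Ico ((k:ℝ)*ρ) (((k:ℝ)+1)*ρ) with hAdef
  have hd : Measurable fun y : X => dist x y := (continuous_const.dist continuous_id).measurable
  have hmeas : ∀ k, MeasurableSet (A k) := fun k => hd measurableSet_Ico
  have hdisj : Pairwise (Function.onFun Disjoint A) := by
    intro i j hij
    refine Set.disjoint_left.mpr fun y hyi hyj => ?_
    rcases lt_or_gt_of_ne hij with h | h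
    · have h1 : ((i:ℝ)+1) ≤ (j:ℝ) := by exact_mod_cast h
      have := hyi.2; have := hyj.1
      nlinarith
    · have h1 : ((j:ℝ)+1) ≤ (i:ℝ) := by exact_mod_cast h
      have := hyj.2; have := hyi.1
      nlinarith
  have hU : ⋃ k, A k = Set.univ := by
    refine Set.eq_univ_of_forall fun y => Set.mem_iUnion.mpr ?_
    set d := dist x y
    have hd0 : 0 ≤ d := dist_nonneg
    refine ⟨⌊d/ρ⌋₊, ?_, ?_⟩
    · have := Nat.floor_le (div_nonneg hd0 hρ.le)
      calc (⌊d/ρ⌋₊ : ℝ) * ρ ≤ (d/ρ) * ρ := by nlinarith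
        _ = d := by field_simp
    · have := Nat.lt_floor_add_one (d/ρ)
      calc d = (d/ρ)*ρ := by field_simp
        _ < ((⌊d/ρ⌋₊:ℝ)+1)*ρ := by nlinarith
  have term_bound : ∀ k : ℕ,
      ∫⁻ y in A k, ENNReal.ofReal (Real.exp (-(dist x y)^2 / (8*t))) ∂μ
        ≤ ENNReal.ofReal (C₀ * ρ ^ n₁ * (1+ρ)^(n₂-n₁))
            * ENNReal.ofReal (((k:ℝ)+1)^n₂ * Real.exp (-(k:ℝ)^2)) := by
    intro k
    have hk : (0:ℝ) ≤ k := Nat.cast_nonneg k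
    have hstep1 : ∫⁻ y in A k, ENNReal.ofReal (Real.exp (-(dist x y)^2 / (8*t))) ∂μ
        ≤ ENNReal.ofReal (Real.exp (-(k:ℝ)^2)) * μ (A k) := by
      rw [← setLIntegral_const (A k) (ENNReal.ofReal (Real.exp (-(k:ℝ)^2)))]
      refine setLIntegral_mono measurable_const fun y hy => ?_
      refine ENNReal.ofReal_le_ofReal (Real.exp_le_exp.mpr ?_)
      have h1 : (k:ℝ)*ρ ≤ dist x y := hy.1
      have h2 : ((k:ℝ)*ρ)*((k:ℝ)*ρ) ≤ dist x y * dist x y :=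
        mul_self_le_mul_self (by positivity) h1
      rw [div_le_iff₀ (by linarith : (0:ℝ) < 8*t)]
      nlinarith
    have hsub : A k ⊆ Metric.ball x (((k:ℝ)+1)*ρ) := fun y hy => by
      rw [Metric.mem_ball, dist_comm]; exact hy.2
    have hμ : μ (A k) ≤ ENNReal.ofReal (C₀ * (((k:ℝ)+1)*ρ) ^ n₁ * (1 + ((k:ℝ)+1)*ρ) ^ (n₂-n₁)) :=
      (measure_mono hsub).trans (hV x _ (by positivity))
    have hreal : Real.exp (-(k:ℝ)^2) * (C₀ * (((k:ℝ)+1)*ρ) ^ n₁ * (1 + ((k:ℝ)+1)*ρ) ^ (n₂-n₁))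
        ≤ (C₀ * ρ ^ n₁ * (1+ρ)^(n₂-n₁)) * (((k:ℝ)+1)^n₂ * Real.exp (-(k:ℝ)^2)) := by
      have e1 : (((k:ℝ)+1)*ρ) ^ n₁ = ((k:ℝ)+1)^n₁ * ρ ^ n₁ :=
        Real.mul_rpow (by positivity) hρ.le
      have e2 : (1 + ((k:ℝ)+1)*ρ) ^ (n₂-n₁) ≤ ((k:ℝ)+1)^(n₂-n₁) * (1+ρ)^(n₂-n₁) := by
        rw [← Real.mul_rpow (by positivity) (by positivity)]
        exact Real.rpow_le_rpow (by positivity) (by nlinarith) (by linarith)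
      have e3 : ((k:ℝ)+1)^n₁ * ((k:ℝ)+1)^(n₂-n₁) = ((k:ℝ)+1)^n₂ := by
        rw [← Real.rpow_add (by positivity)]; ring_nf
      calc Real.exp (-(k:ℝ)^2) * (C₀ * (((k:ℝ)+1)*ρ) ^ n₁ * (1 + ((k:ℝ)+1)*ρ) ^ (n₂-n₁))
          = (C₀ * (((k:ℝ)+1)^n₁ * ρ ^ n₁) * Real.exp (-(k:ℝ)^2)) * (1 + ((k:ℝ)+1)*ρ) ^ (n₂-n₁) := by
            rw [e1]; ring
        _ ≤ (C₀ * (((k:ℝ)+1)^n₁ * ρ ^ n₁) * Real.exp (-(k:ℝ)^2))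
              * (((k:ℝ)+1)^(n₂-n₁) * (1+ρ)^(n₂-n₁)) := by
            refine mul_le_mul_of_nonneg_left e2 (by positivity)
        _ = (C₀ * ρ ^ n₁ * (1+ρ)^(n₂-n₁))
              * ((((k:ℝ)+1)^n₁ * ((k:ℝ)+1)^(n₂-n₁)) * Real.exp (-(k:ℝ)^2)) := by
            ring
        _ = (C₀ * ρ ^ n₁ * (1+ρ)^(n₂-n₁)) * (((k:ℝ)+1)^n₂ * Real.exp (-(k:ℝ)^2)) := by
            rw [e3]
    calc ∫⁻ y in A k, ENNReal.ofReal (Real.exp (-(dist x y)^2 / (8*t))) ∂μ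
        ≤ ENNReal.ofReal (Real.exp (-(k:ℝ)^2)) * μ (A k) := hstep1
      _ ≤ ENNReal.ofReal (Real.exp (-(k:ℝ)^2))
            * ENNReal.ofReal (C₀ * (((k:ℝ)+1)*ρ) ^ n₁ * (1 + ((k:ℝ)+1)*ρ) ^ (n₂-n₁)) :=
          mul_le_mul_right hμ _
      _ = ENNReal.ofReal (Real.exp (-(k:ℝ)^2)
            * (C₀ * (((k:ℝ)+1)*ρ) ^ n₁ * (1 + ((k:ℝ)+1)*ρ) ^ (n₂-n₁))) := by
          rw [← ENNReal.ofReal_mul (Real.exp_pos _).le]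
      _ ≤ ENNReal.ofReal ((C₀ * ρ ^ n₁ * (1+ρ)^(n₂-n₁)) * (((k:ℝ)+1)^n₂ * Real.exp (-(k:ℝ)^2))) :=
          ENNReal.ofReal_le_ofReal hreal
      _ = ENNReal.ofReal (C₀ * ρ ^ n₁ * (1+ρ)^(n₂-n₁))
            * ENNReal.ofReal (((k:ℝ)+1)^n₂ * Real.exp (-(k:ℝ)^2)) := by
          rw [ENNReal.ofReal_mul (by positivity)]
  have hn₂ : (0:ℝ) ≤ n₂ := by linarith
  calc ∫⁻ y, ENNReal.ofReal (Real.exp (-(dist x y)^2 / (8*t))) ∂μ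
      = ∑' k : ℕ, ∫⁻ y in A k, ENNReal.ofReal (Real.exp (-(dist x y)^2 / (8*t))) ∂μ := by
        rw [← lintegral_iUnion hmeas hdisj, hU, Measure.restrict_univ]
    _ ≤ ∑' k : ℕ, ENNReal.ofReal (C₀ * ρ ^ n₁ * (1+ρ)^(n₂-n₁))
          * ENNReal.ofReal (((k:ℝ)+1)^n₂ * Real.exp (-(k:ℝ)^2)) :=
        ENNReal.tsum_le_tsum term_bound
    _ = ENNReal.ofReal (C₀ * ρ ^ n₁ * (1+ρ)^(n₂-n₁))
          * ∑' k : ℕ, ENNReal.ofReal (((k:ℝ)+1)^n₂ * Real.exp (-(k:ℝ)^2)) :=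
        ENNReal.tsum_mul_left
    _ ≤ ENNReal.ofReal (C₀ * ρ ^ n₁ * (1+ρ)^(n₂-n₁))
          * ENNReal.ofReal (Real.exp ((n₂+1)^2) * 2) :=
        mul_le_mul_right (aux_tsum_bound n₂ hn₂) _
    _ = ENNReal.ofReal (C₀ * ρ ^ n₁ * (1+ρ)^(n₂-n₁) * (Real.exp ((n₂+1)^2) * 2)) := by
        rw [← ENNReal.ofReal_mul (by positivity)]

/-- Kernel-level integral estimate (5.4) in the Davies–Gaffney lemma of Section 5.3:
under the non-uniform volume growth `μ(B(x,r)) ≤ C₀ r^{n₁}` for `r ≤ 1` and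
`μ(B(x,r)) ≤ C₀ r^{n₂}` for `r ≥ 1`, any kernel with the Gaussian bound
`|p(y,z)| ≤ t^{-n₁/2} exp(-d(y,z)²/(4t))` satisfies
`∫_{d(x,y)>r} |p(x,y)| dμ(y) ≤ C (1+t)^{(n₂-n₁)/2} exp(-r²/(8t))`. -/
theorem offdiagonal_kernel_estimate {X : Type*} [MetricSpace X] [MeasurableSpace X]
    [BorelSpace X] (μ : Measure X) (C₀ n₁ n₂ : ℝ) (hC₀ : 0 < C₀) (hn₁ : 0 < n₁)
    (hn : n₁ ≤ n₂)
    (hV₁ : ∀ (x : X) (r : ℝ), 0 < r → r ≤ 1 →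
      μ (Metric.ball x r) ≤ ENNReal.ofReal (C₀ * r ^ n₁))
    (hV₂ : ∀ (x : X) (r : ℝ), 1 ≤ r →
      μ (Metric.ball x r) ≤ ENNReal.ofReal (C₀ * r ^ n₂)) :
    ∃ C > 0, ∀ t > (0 : ℝ), ∀ r > (0 : ℝ), ∀ x : X, ∀ p : X × X → ℝ,
      Measurable p →
      (∀ y z : X, |p (y, z)| ≤ t ^ (-(n₁ / 2)) * Real.exp (-(dist y z) ^ 2 / (4 * t))) →
      ∫⁻ y in {y : X | r < dist x y}, ENNReal.ofReal |p (x, y)| ∂μ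
        ≤ ENNReal.ofReal (C * (1 + t) ^ ((n₂ - n₁) / 2) * Real.exp (-r ^ 2 / (8 * t))) := by
  have hV : ∀ (x : X) (ρ : ℝ), 0 < ρ →
      μ (Metric.ball x ρ) ≤ ENNReal.ofReal (C₀ * ρ ^ n₁ * (1 + ρ) ^ (n₂ - n₁)) :=
    aux_vol μ C₀ n₁ n₂ hC₀ hn hV₁ hV₂
  set S : ℝ := Real.exp ((n₂+1)^2) * 2 with hSdef
  have hS : 0 < S := by positivity
  refine ⟨C₀ * (8:ℝ)^(n₁/2) * (16:ℝ)^((n₂-n₁)/2) * S, by positivity, ?_⟩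
  intro t ht r hr x p hpm hp
  set ρ : ℝ := Real.sqrt (8*t) with hρdef
  have hρ : 0 < ρ := Real.sqrt_pos.mpr (by linarith)
  have hρ2 : ρ^2 = 8*t := Real.sq_sqrt (by linarith)
  set c : ℝ := t ^ (-(n₁/2)) * Real.exp (-r^2/(8*t)) with hcdef
  have hc : 0 ≤ c := by positivity
  have hpt : ∀ y ∈ {y : X | r < dist x y},
      ENNReal.ofReal |p (x, y)| ≤ ENNReal.ofReal (c * Real.exp (-(dist x y)^2/(8*t))) := by
    intro y hy
    refine ENNReal.ofReal_le_ofReal ?_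
    have hy' : r < dist x y := hy
    have hd2 : r^2 ≤ (dist x y)^2 := by nlinarith
    have hexp : -(dist x y)^2/(4*t) ≤ -r^2/(8*t) + -(dist x y)^2/(8*t) := by
      rw [show -(dist x y)^2/(4*t) = -(dist x y)^2/(8*t) + -(dist x y)^2/(8*t) by ring]
      have h1 : -(dist x y)^2/(8*t) ≤ -r^2/(8*t) := by
        apply div_le_div_of_nonneg_right ?_ ?_ |>.trans_eq rfl
        · linarith
        · linarith
      linarith
    calc |p (x, y)| ≤ t ^ (-(n₁/2)) * Real.exp (-(dist x y)^2/(4*t)) := hp x y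
      _ ≤ t ^ (-(n₁/2)) * Real.exp (-r^2/(8*t) + -(dist x y)^2/(8*t)) := by
          refine mul_le_mul_of_nonneg_left (Real.exp_le_exp.mpr hexp) (by positivity)
      _ = c * Real.exp (-(dist x y)^2/(8*t)) := by
          rw [Real.exp_add, hcdef]; ring
  have hcont : Continuous fun y : X => c * Real.exp (-(dist x y)^2/(8*t)) := by
    fun_prop
  have hmeasg : Measurable fun y : X => ENNReal.ofReal (c * Real.exp (-(dist x y)^2/(8*t))) :=
    hcont.measurable.ennreal_ofReal
  have key : ∫⁻ y, ENNReal.ofReal (Real.exp (-(dist x y)^2 / (8*t))) ∂μ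
      ≤ ENNReal.ofReal (C₀ * ρ ^ n₁ * (1 + ρ) ^ (n₂-n₁) * S) :=
    aux_gauss μ C₀ n₁ n₂ hC₀ hn₁ hn hV x t ht
  have hfinal : c * (C₀ * ρ ^ n₁ * (1 + ρ) ^ (n₂-n₁) * S)
      ≤ (C₀ * (8:ℝ)^(n₁/2) * (16:ℝ)^((n₂-n₁)/2) * S) * (1 + t) ^ ((n₂ - n₁) / 2)
          * Real.exp (-r ^ 2 / (8 * t)) := by
    have h8t : (0:ℝ) ≤ 8*t := by linarith
    have key1 : t ^ (-(n₁/2)) * ρ ^ n₁ = (8:ℝ)^(n₁/2) := by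
      have : ρ ^ n₁ = (8*t) ^ (n₁/2) := by
        rw [hρdef, Real.sqrt_eq_rpow, ← Real.rpow_mul h8t]
        congr 1
        ring
      rw [this, Real.mul_rpow (by norm_num) ht.le, ← mul_assoc,
        mul_comm (t ^ (-(n₁/2))) ((8:ℝ)^(n₁/2)), mul_assoc, ← Real.rpow_add ht]
      norm_num
    have key2 : (1+ρ) ^ (n₂-n₁) ≤ (16:ℝ)^((n₂-n₁)/2) * (1+t)^((n₂-n₁)/2) := by
      have h1t : (0:ℝ) ≤ 1 + t := by linarith
      have hsq : Real.sqrt (8*t) ≤ 3 * Real.sqrt (1+t) := by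
        rw [show (3:ℝ) = Real.sqrt 9 by
          rw [show (9:ℝ) = 3^2 by norm_num, Real.sqrt_sq (by norm_num)]]
        rw [← Real.sqrt_mul (by norm_num) (1+t)]
        exact Real.sqrt_le_sqrt (by nlinarith)
      have hone : (1:ℝ) ≤ Real.sqrt (1+t) := by
        have h := Real.sqrt_le_sqrt (by linarith : (1:ℝ) ≤ 1+t)
        simpa using h
      have hbase : 1 + ρ ≤ 4 * Real.sqrt (1+t) := by
        rw [hρdef]; linarith
      calc (1+ρ) ^ (n₂-n₁) ≤ (4 * Real.sqrt (1+t)) ^ (n₂-n₁) :=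
            Real.rpow_le_rpow (by positivity) hbase (by linarith)
        _ = (4:ℝ)^(n₂-n₁) * (Real.sqrt (1+t))^(n₂-n₁) :=
            Real.mul_rpow (by norm_num) (Real.sqrt_nonneg _)
        _ = (16:ℝ)^((n₂-n₁)/2) * (1+t)^((n₂-n₁)/2) := by
            congr 1
            · rw [show (4:ℝ) = (16:ℝ)^((1:ℝ)/2) by
                rw [← Real.sqrt_eq_rpow, show (16:ℝ) = 4^2 by norm_num,
                  Real.sqrt_sq (by norm_num)]]
              rw [← Real.rpow_mul (by norm_num)]
              ring_nf
            · rw [Real.sqrt_eq_rpow, ← Real.rpow_mul h1t]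
              ring_nf
    have hrpow8 : (0:ℝ) ≤ (8:ℝ)^(n₁/2) := by positivity
    calc c * (C₀ * ρ ^ n₁ * (1 + ρ) ^ (n₂-n₁) * S)
        = (t ^ (-(n₁/2)) * ρ ^ n₁) * (1+ρ)^(n₂-n₁) * (C₀ * S * Real.exp (-r^2/(8*t))) := by
          rw [hcdef]; ring
      _ = (8:ℝ)^(n₁/2) * (1+ρ)^(n₂-n₁) * (C₀ * S * Real.exp (-r^2/(8*t))) := by rw [key1]
      _ ≤ (8:ℝ)^(n₁/2) * ((16:ℝ)^((n₂-n₁)/2) * (1+t)^((n₂-n₁)/2))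
            * (C₀ * S * Real.exp (-r^2/(8*t))) := by
          refine mul_le_mul_of_nonneg_right (mul_le_mul_of_nonneg_left key2 hrpow8) (by positivity)
      _ = (C₀ * (8:ℝ)^(n₁/2) * (16:ℝ)^((n₂-n₁)/2) * S) * (1 + t) ^ ((n₂ - n₁) / 2)
            * Real.exp (-r ^ 2 / (8 * t)) := by ring
  calc ∫⁻ y in {y : X | r < dist x y}, ENNReal.ofReal |p (x, y)| ∂μ
      ≤ ∫⁻ y in {y : X | r < dist x y},
          ENNReal.ofReal (c * Real.exp (-(dist x y)^2/(8*t))) ∂μ :=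
        setLIntegral_mono hmeasg hpt
    _ ≤ ∫⁻ y, ENNReal.ofReal (c * Real.exp (-(dist x y)^2/(8*t))) ∂μ :=
        setLIntegral_le_lintegral _ _
    _ = ENNReal.ofReal c * ∫⁻ y, ENNReal.ofReal (Real.exp (-(dist x y)^2/(8*t))) ∂μ := by
        simp_rw [ENNReal.ofReal_mul hc]
        rw [lintegral_const_mul' _ _ ENNReal.ofReal_ne_top]
    _ ≤ ENNReal.ofReal c * ENNReal.ofReal (C₀ * ρ ^ n₁ * (1 + ρ) ^ (n₂-n₁) * S) :=
        mul_le_mul_right key _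
    _ = ENNReal.ofReal (c * (C₀ * ρ ^ n₁ * (1 + ρ) ^ (n₂-n₁) * S)) := by
        rw [← ENNReal.ofReal_mul hc]
    _ ≤ ENNReal.ofReal ((C₀ * (8:ℝ)^(n₁/2) * (16:ℝ)^((n₂-n₁)/2) * S) * (1 + t) ^ ((n₂ - n₁) / 2)
          * Real.exp (-r ^ 2 / (8 * t))) := ENNReal.ofReal_le_ofReal hfinal
end

section
/- Let (X, d) be a metric space with a Borel measure μ, and let C₀ > 0 and 0 < n₁ ≤ n₂ be real numbers such that μ(B(x,r)) ≤ C₀ r^{n₁} for all x ∈ X and 0 < r ≤ 1, and μ(B(x,r)) ≤ C₀ r^{n₂} for all x ∈ X and r ≥ 1. Then there exists a constant C > 0, depending only on C₀, n₁, n₂, such that for every t > 0, every r > 0, every measurable p : X × X → ℝ with |p(y,z)| ≤ t^{-n₁/2} exp(-d(y,z)²/(4t)) for all y,z, every pair of open balls B₁, B₂ in X with d(y,z) > r for all y ∈ B₁, z ∈ B₂, and all f, g ∈ L²(μ) with f vanishing μ-a.e. outside B₁ and g vanishing μ-a.e. outside B₂: |∫∫ p(x,y) f(x) g(y) dμ(y)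 dμ(x)| ≤ C (1+t)^{(n₂-n₁)/2} exp(-r²/(8t)) ‖f‖_{L²} ‖g‖_{L²}. -/
/-! On `B₁ × B₂` half of the Gaussian decay pays for the separation:
`e^{-d²/4t} ≤ e^{-r²/8t} e^{-d²/8t}`. The remaining kernel `t^{-n₁/2} e^{-d²/8t}` has row and
column integrals at most `C (1+t)^{(n₂-n₁)/2}`: on the annulus `k√(8t) ≤ d(x,y) < (k+1)√(8t)` the
kernel is at most `e^{-k²}`, while the volume growth bounds the measure of the annulus by
`(k+1)^{n₂}` times that of the ball of radius `√(8t)`, of order `t^{n₁/2} (1+t)^{(n₂-n₁)/2}`.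
Schur's test turns these row and column bounds into the bound on the bilinear form. -/

open MeasureTheory Real Metric
open scoped ENNReal

/-- Interpolates the two growth regimes: comparable to `ρ ^ n₁` for `ρ ≤ 1` and to `ρ ^ n₂` for
`ρ ≥ 1`. -/
noncomputable def volumeProfile (n₁ n₂ ρ : ℝ) : ℝ := ρ ^ n₁ * (1 + ρ) ^ (n₂ - n₁)

theorem measure_ball_le_volumeProfile {X : Type*} [PseudoMetricSpace X] [MeasurableSpace X]
    {μ : Measure X} {C₀ n₁ n₂ : ℝ} (hC₀ : 0 ≤ C₀) (hn : n₁ ≤ n₂)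
    (hV₁ : ∀ (x : X) (r : ℝ), 0 < r → r ≤ 1 → μ (ball x r) ≤ ENNReal.ofReal (C₀ * r ^ n₁))
    (hV₂ : ∀ (x : X) (r : ℝ), 1 ≤ r → μ (ball x r) ≤ ENNReal.ofReal (C₀ * r ^ n₂))
    (x : X) {ρ : ℝ} (hρ : 0 < ρ) :
    μ (ball x ρ) ≤ ENNReal.ofReal (C₀ * volumeProfile n₁ n₂ ρ) := by
  unfold volumeProfile
  rcases le_total ρ 1 with h | h
  · refine (hV₁ x ρ hρ h).trans (ENNReal.ofReal_le_ofReal ?_)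
    calc C₀ * ρ ^ n₁ = C₀ * (ρ ^ n₁ * 1) := by ring
      _ ≤ _ := by gcongr; exact one_le_rpow (by linarith) (by linarith)
  · refine (hV₂ x ρ h).trans (ENNReal.ofReal_le_ofReal ?_)
    rw [show ρ ^ n₂ = ρ ^ n₁ * ρ ^ (n₂ - n₁) by rw [← rpow_add hρ]; ring_nf]
    gcongr
    linarith

theorem volumeProfile_mul_le {n₁ n₂ l a : ℝ} (hn : n₁ ≤ n₂) (hl : 1 ≤ l) (ha : 0 ≤ a) :
    volumeProfile n₁ n₂ (l * a) ≤ l ^ n₂ * volumeProfile n₁ n₂ a := by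
  have hl0 : 0 ≤ l := by linarith
  calc volumeProfile n₁ n₂ (l * a) ≤ (l * a) ^ n₁ * (l * (1 + a)) ^ (n₂ - n₁) := by
        unfold volumeProfile; gcongr; · linarith
    _ = (l ^ n₁ * l ^ (n₂ - n₁)) * volumeProfile n₁ n₂ a := by
        rw [mul_rpow hl0 ha, mul_rpow hl0 (by linarith), volumeProfile]; ring
    _ = l ^ n₂ * volumeProfile n₁ n₂ a := by
        rw [← rpow_add (by linarith)]; ring_nf

theorem volumeProfile_sqrt_mul_le {n₁ n₂ s t : ℝ} (hn : n₁ ≤ n₂) (hs : 0 ≤ s) (ht : 0 ≤ t) :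
    volumeProfile n₁ n₂ √(s * t)
      ≤ volumeProfile n₁ n₂ √s * (t ^ (n₁ / 2) * (1 + t) ^ ((n₂ - n₁) / 2)) := by
  have hsqrt : ∀ u : ℝ, 0 ≤ u → ∀ m : ℝ, √u ^ m = u ^ (m / 2) := fun u hu m => by
    rw [sqrt_eq_rpow, ← rpow_mul hu]; ring_nf
  have h1t : 1 + √s * √t ≤ (1 + √s) * √(1 + t) := by
    have : √t ≤ √(1 + t) := sqrt_le_sqrt (by linarith)
    have : 1 ≤ √(1 + t) := one_le_sqrt.mpr (by linarith)
    nlinarith [sqrt_nonneg s]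
  calc volumeProfile n₁ n₂ √(s * t) ≤ (√s * √t) ^ n₁ * ((1 + √s) * √(1 + t)) ^ (n₂ - n₁) := by
        unfold volumeProfile; rw [sqrt_mul hs]; gcongr
    _ = volumeProfile n₁ n₂ √s * (t ^ (n₁ / 2) * (1 + t) ^ ((n₂ - n₁) / 2)) := by
        rw [mul_rpow (sqrt_nonneg _) (sqrt_nonneg _), mul_rpow (by positivity) (sqrt_nonneg _),
          hsqrt t ht, hsqrt (1 + t) (by linarith), volumeProfile]
        ring

theorem Real.exp_neg_sq_mul_add_one_rpow_le {N : ℝ} (hN : 0 ≤ N) (k : ℕ) :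
    exp (-(k : ℝ) ^ 2) * ((k : ℝ) + 1) ^ N ≤ exp (N ^ 2 / 2) * exp (-(1 / 2)) ^ k := by
  have hpow : ((k : ℝ) + 1) ^ N ≤ exp (k * N) := by
    rw [exp_mul]
    gcongr
    exact add_one_le_exp _
  -- `-k² + kN ≤ N²/2 - k/2` since `(k - N)² + k (k - 1) ≥ 0`
  have hk : (0 : ℝ) ≤ k * (k - 1) := by
    rcases k.eq_zero_or_pos with rfl | hk
    · simp
    · have : (1 : ℝ) ≤ k := by exact_mod_cast hk
      nlinarith
  calc exp (-(k : ℝ) ^ 2) * ((k : ℝ) + 1) ^ N ≤ exp (-(k : ℝ) ^ 2) * exp (k * N) := by gcongr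
    _ = exp (-(k : ℝ) ^ 2 + k * N) := (exp_add _ _).symm
    _ ≤ exp (N ^ 2 / 2 + k * -(1 / 2)) := exp_le_exp.mpr (by nlinarith [sq_nonneg ((k : ℝ) - N)])
    _ = exp (N ^ 2 / 2) * exp (-(1 / 2)) ^ k := by rw [exp_add, ← exp_nat_mul]

theorem lintegral_exp_neg_dist_sq_div_le {X : Type*} [PseudoMetricSpace X] [MeasurableSpace X]
    [OpensMeasurableSpace X] (μ : Measure X) (x : X) {a M N : ℝ} (ha : 0 < a) (hM : 0 ≤ M)
    (hN : 0 ≤ N) (hball : ∀ k : ℕ, μ (ball x ((k + 1) * a)) ≤ ENNReal.ofReal ((k + 1) ^ N * M)) :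
    ∫⁻ y, ENNReal.ofReal (exp (-dist x y ^ 2 / a ^ 2)) ∂μ
      ≤ ENNReal.ofReal (exp (N ^ 2 / 2) / (1 - exp (-(1 / 2))) * M) := by
  -- on the annulus `k a ≤ dist x y < (k + 1) a` the Gaussian is at most `exp (-k ^ 2)`
  have hpt : ∀ y, ENNReal.ofReal (exp (-dist x y ^ 2 / a ^ 2))
      ≤ ∑' k : ℕ, (ball x ((k + 1) * a)).indicator
          (fun _ => ENNReal.ofReal (exp (-(k : ℝ) ^ 2))) y := by
    intro y
    set k := ⌊dist x y / a⌋₊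
    refine le_trans ?_ (ENNReal.le_tsum k)
    have hy : y ∈ ball x ((k + 1) * a) := by
      rw [mem_ball, dist_comm, ← div_lt_iff₀ ha]
      exact Nat.lt_floor_add_one _
    have hk : (k : ℝ) ≤ dist x y / a := Nat.floor_le (by positivity)
    rw [Set.indicator_of_mem hy]
    gcongr
    rw [neg_div, neg_le_neg_iff, ← div_pow]
    gcongr
  have hq : exp (-(1 / 2)) < 1 := exp_lt_one_iff.mpr (by norm_num)
  calc ∫⁻ y, ENNReal.ofReal (exp (-dist x y ^ 2 / a ^ 2)) ∂μ
      ≤ ∫⁻ y, ∑' k : ℕ, (ball x ((k + 1) * a)).indicator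
          (fun _ => ENNReal.ofReal (exp (-(k : ℝ) ^ 2))) y ∂μ := lintegral_mono hpt
    _ = ∑' k : ℕ, ENNReal.ofReal (exp (-(k : ℝ) ^ 2)) * μ (ball x ((k + 1) * a)) := by
        rw [lintegral_tsum fun k => aemeasurable_const.indicator measurableSet_ball]
        simp_rw [lintegral_indicator_const measurableSet_ball]
    _ ≤ ∑' k : ℕ, ENNReal.ofReal ((exp (N ^ 2 / 2) * M) * exp (-(1 / 2)) ^ k) := by
        refine ENNReal.tsum_le_tsum fun k => ?_
        grw [hball k, ← ENNReal.ofReal_mul (exp_nonneg _)]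
        refine ENNReal.ofReal_le_ofReal ?_
        have := exp_neg_sq_mul_add_one_rpow_le hN k
        calc exp (-(k : ℝ) ^ 2) * ((k + 1) ^ N * M)
            = exp (-(k : ℝ) ^ 2) * (k + 1) ^ N * M := by ring
          _ ≤ exp (N ^ 2 / 2) * exp (-(1 / 2)) ^ k * M := by gcongr
          _ = exp (N ^ 2 / 2) * M * exp (-(1 / 2)) ^ k := by ring
    _ = ENNReal.ofReal (∑' k : ℕ, (exp (N ^ 2 / 2) * M) * exp (-(1 / 2)) ^ k) :=
        (ENNReal.ofReal_tsum_of_nonneg (fun k => by positivity)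
          ((summable_geometric_of_lt_one (by positivity) hq).mul_left _)).symm
    _ = ENNReal.ofReal (exp (N ^ 2 / 2) / (1 - exp (-(1 / 2))) * M) := by
        rw [tsum_mul_left, tsum_geometric_of_lt_one (by positivity) hq]
        congr 1
        ring

/-- Schur's test, proved by Cauchy–Schwarz for the measure `K d(μ × ν)`. -/
theorem lintegral_lintegral_mul_le_of_lintegral_le {X Y : Type*} [MeasurableSpace X]
    [MeasurableSpace Y] {μ : Measure X} {ν : Measure Y} [SFinite μ] [SFinite ν]
    {K : X × Y → ℝ≥0∞} (hK : Measurable K) {F : X → ℝ≥0∞} {G : Y → ℝ≥0∞}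
    (hF : AEMeasurable F μ) (hG : AEMeasurable G ν) {S : ℝ≥0∞}
    (hrow : ∀ x, ∫⁻ y, K (x, y) ∂ν ≤ S) (hcol : ∀ y, ∫⁻ x, K (x, y) ∂μ ≤ S) :
    ∫⁻ x, ∫⁻ y, K (x, y) * (F x * G y) ∂ν ∂μ ≤ S * eLpNorm F 2 μ * eLpNorm G 2 ν := by
  set ρ := (μ.prod ν).withDensity K
  have hF' : AEMeasurable (fun z : X × Y => F z.1) (μ.prod ν) := hF.comp_fst
  have hG' : AEMeasurable (fun z : X × Y => G z.2) (μ.prod ν) := hG.comp_snd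
  have hFρ : ∫⁻ z, F z.1 ^ (2 : ℝ) ∂ρ ≤ S * ∫⁻ x, F x ^ (2 : ℝ) ∂μ := by
    rw [lintegral_withDensity_eq_lintegral_mul₀ hK.aemeasurable (hF'.pow_const _),
      lintegral_prod _ (hK.aemeasurable.mul (hF'.pow_const _)),
      ← lintegral_const_mul'' _ (hF.pow_const _)]
    refine lintegral_mono fun x => ?_
    simp only [Pi.mul_apply]
    rw [lintegral_mul_const _ (f := fun y => K (x, y)) (hK.comp measurable_prodMk_left)]
    exact mul_le_mul_left (hrow x) _
  have hGρ : ∫⁻ z, G z.2 ^ (2 : ℝ) ∂ρ ≤ S * ∫⁻ y, G y ^ (2 : ℝ) ∂ν := by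
    rw [lintegral_withDensity_eq_lintegral_mul₀ hK.aemeasurable (hG'.pow_const _),
      lintegral_prod_symm _ (hK.aemeasurable.mul (hG'.pow_const _)),
      ← lintegral_const_mul'' _ (hG.pow_const _)]
    refine lintegral_mono fun y => ?_
    simp only [Pi.mul_apply]
    rw [lintegral_mul_const _ (f := fun x => K (x, y)) (hK.comp measurable_prodMk_right)]
    exact mul_le_mul_left (hcol y) _
  have hac := withDensity_absolutelyContinuous (μ.prod ν) K
  calc ∫⁻ x, ∫⁻ y, K (x, y) * (F x * G y) ∂ν ∂μ = ∫⁻ z, K z * (F z.1 * G z.2) ∂μ.prod ν :=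
        (lintegral_prod _ (hK.aemeasurable.mul (hF'.mul hG'))).symm
    _ = ∫⁻ z, F z.1 * G z.2 ∂ρ :=
        (lintegral_withDensity_eq_lintegral_mul₀ hK.aemeasurable (hF'.mul hG')).symm
    _ ≤ (∫⁻ z, F z.1 ^ (2 : ℝ) ∂ρ) ^ (1 / 2 : ℝ) * (∫⁻ z, G z.2 ^ (2 : ℝ) ∂ρ) ^ (1 / 2 : ℝ) :=
        ENNReal.lintegral_mul_le_Lp_mul_Lq ρ HolderConjugate.two_two (hF'.mono_ac hac)
          (hG'.mono_ac hac)
    _ ≤ (S * ∫⁻ x, F x ^ (2 : ℝ) ∂μ) ^ (1 / 2 : ℝ)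
          * (S * ∫⁻ y, G y ^ (2 : ℝ) ∂ν) ^ (1 / 2 : ℝ) := by
        gcongr
    _ = S * eLpNorm F 2 μ * eLpNorm G 2 ν := by
        simp only [eLpNorm_eq_lintegral_rpow_enorm_toReal two_ne_zero ENNReal.ofNat_ne_top,
          enorm_eq_self, ENNReal.toReal_ofNat]
        rw [ENNReal.mul_rpow_of_nonneg _ _ (by norm_num),
          ENNReal.mul_rpow_of_nonneg _ _ (by norm_num), mul_mul_mul_comm,
          ← ENNReal.rpow_add_of_nonneg _ _ (by norm_num) (by norm_num)]
        norm_num [mul_assoc]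

theorem lintegral_exp_neg_dist_sq_le_of_volume_growth {X : Type*} [PseudoMetricSpace X]
    [MeasurableSpace X] [OpensMeasurableSpace X] {μ : Measure X} {C₀ n₁ n₂ : ℝ} (hC₀ : 0 < C₀)
    (hn₂ : 0 ≤ n₂) (hn : n₁ ≤ n₂)
    (hV₁ : ∀ (x : X) (r : ℝ), 0 < r → r ≤ 1 → μ (ball x r) ≤ ENNReal.ofReal (C₀ * r ^ n₁))
    (hV₂ : ∀ (x : X) (r : ℝ), 1 ≤ r → μ (ball x r) ≤ ENNReal.ofReal (C₀ * r ^ n₂)) :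
    ∃ C > 0, ∀ t > (0 : ℝ), ∀ x : X, ∫⁻ y, ENNReal.ofReal (exp (-dist x y ^ 2 / (8 * t))) ∂μ
      ≤ ENNReal.ofReal (C * (t ^ (n₁ / 2) * (1 + t) ^ ((n₂ - n₁) / 2))) := by
  have hq : exp (-(1 / 2)) < 1 := exp_lt_one_iff.mpr (by norm_num)
  have hγ : 0 < exp (n₂ ^ 2 / 2) / (1 - exp (-(1 / 2))) := div_pos (exp_pos _) (by linarith)
  refine ⟨exp (n₂ ^ 2 / 2) / (1 - exp (-(1 / 2))) * (C₀ * volumeProfile n₁ n₂ √8), ?_,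
    fun t ht x => ?_⟩
  · have : 0 < volumeProfile n₁ n₂ √8 := by unfold volumeProfile; positivity
    positivity
  have ha : 0 < √(8 * t) := by positivity
  have hball : ∀ k : ℕ, μ (ball x ((k + 1) * √(8 * t)))
      ≤ ENNReal.ofReal ((k + 1) ^ n₂ * (C₀ * volumeProfile n₁ n₂ √(8 * t))) := by
    intro k
    refine (measure_ball_le_volumeProfile hC₀.le hn hV₁ hV₂ x (by positivity)).trans
      (ENNReal.ofReal_le_ofReal ?_)
    calc C₀ * volumeProfile n₁ n₂ ((k + 1) * √(8 * t))
        ≤ C₀ * ((k + 1) ^ n₂ * volumeProfile n₁ n₂ √(8 * t)) := by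
          gcongr; exact volumeProfile_mul_le hn (by simp) ha.le
      _ = _ := by ring
  have hmain := lintegral_exp_neg_dist_sq_div_le μ x ha
    (by unfold volumeProfile; positivity) hn₂ hball
  rw [sq_sqrt (by positivity)] at hmain
  refine hmain.trans (ENNReal.ofReal_le_ofReal ?_)
  rw [mul_assoc, mul_assoc]
  gcongr
  exact volumeProfile_sqrt_mul_le hn (by norm_num) ht.le

theorem lintegral_indicator_enorm_le_of_lt_dist {X : Type*} [PseudoMetricSpace X]
    [MeasurableSpace X] {μ : Measure X} {s : Set (X × X)} {p : X × X → ℝ} {c r t B : ℝ}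
    (hc : 0 ≤ c) (hr : 0 ≤ r) (ht : 0 < t)
    (hp : ∀ z, |p z| ≤ c * exp (-dist z.1 z.2 ^ 2 / (4 * t))) (hs : ∀ z ∈ s, r < dist z.1 z.2)
    (hgauss : ∀ x, ∫⁻ y, ENNReal.ofReal (exp (-dist x y ^ 2 / (8 * t))) ∂μ ≤ ENNReal.ofReal B) :
    (∀ x, ∫⁻ y, s.indicator (fun z => ‖p z‖ₑ) (x, y) ∂μ
        ≤ ENNReal.ofReal (c * exp (-r ^ 2 / (8 * t)) * B)) ∧
      ∀ y, ∫⁻ x, s.indicator (fun z => ‖p z‖ₑ) (x, y) ∂μ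
        ≤ ENNReal.ofReal (c * exp (-r ^ 2 / (8 * t)) * B) := by
  have hpt : ∀ z, s.indicator (fun z => ‖p z‖ₑ) z ≤ ENNReal.ofReal (c * exp (-r ^ 2 / (8 * t)))
      * ENNReal.ofReal (exp (-dist z.1 z.2 ^ 2 / (8 * t))) := by
    intro z
    by_cases hz : z ∈ s
    · rw [Set.indicator_of_mem hz, ← ENNReal.ofReal_mul (by positivity), ← ofReal_norm,
        norm_eq_abs]
      refine ENNReal.ofReal_le_ofReal ((hp z).trans ?_)
      have hrd : r ^ 2 ≤ dist z.1 z.2 ^ 2 := pow_le_pow_left₀ hr (hs z hz).le 2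
      rw [mul_assoc, ← exp_add]
      gcongr
      rw [← add_div, div_le_div_iff₀ (by positivity) (by positivity)]
      nlinarith
    · simp [Set.indicator_of_notMem hz]
  have hint : ∀ x, ENNReal.ofReal (c * exp (-r ^ 2 / (8 * t)))
      * ∫⁻ y, ENNReal.ofReal (exp (-dist x y ^ 2 / (8 * t))) ∂μ
      ≤ ENNReal.ofReal (c * exp (-r ^ 2 / (8 * t)) * B) := fun x => by
    grw [hgauss x, ← ENNReal.ofReal_mul (by positivity)]
  refine ⟨fun x => (lintegral_mono fun y => hpt (x, y)).trans ?_,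
    fun y => (lintegral_mono fun x => hpt (x, y)).trans ?_⟩
  · rw [lintegral_const_mul' _ _ ENNReal.ofReal_ne_top]; exact hint x
  · simp only [dist_comm _ y]
    rw [lintegral_const_mul' _ _ ENNReal.ofReal_ne_top]; exact hint y

theorem enorm_integral_integral_le_lintegral_indicator {X Y : Type*} [MeasurableSpace X]
    [MeasurableSpace Y] {μ : Measure X} {ν : Measure Y} {p : X × Y → ℝ} {f : X → ℝ} {g : Y → ℝ}
    {s : Set X} {t : Set Y} (hf : ∀ᵐ x ∂μ, x ∉ s → f x = 0) (hg : ∀ᵐ y ∂ν, y ∉ t → g y = 0) :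
    ‖∫ x, ∫ y, p (x, y) * f x * g y ∂ν ∂μ‖ₑ
      ≤ ∫⁻ x, ∫⁻ y, (s ×ˢ t).indicator (fun z => ‖p z‖ₑ) (x, y) * (‖f x‖ₑ * ‖g y‖ₑ) ∂ν ∂μ := by
  refine (enorm_integral_le_lintegral_enorm _).trans
    ((lintegral_mono fun x => enorm_integral_le_lintegral_enorm _).trans_eq ?_)
  refine lintegral_congr_ae ?_
  filter_upwards [hf] with x hx
  refine lintegral_congr_ae ?_
  filter_upwards [hg] with y hy
  by_cases hxs : x ∈ s <;> by_cases hyt : y ∈ t <;>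
    simp [Set.indicator, hxs, hyt, hx, hy, enorm_mul, mul_assoc]

theorem sigmaFinite_of_measure_ball_lt_top {X : Type*} [PseudoMetricSpace X] [MeasurableSpace X]
    {μ : Measure X} (h : ∀ x r, μ (ball x r) < ∞) : SigmaFinite μ := by
  rcases isEmpty_or_nonempty X with hX | ⟨⟨x⟩⟩
  · rw [Measure.eq_zero_of_isEmpty μ]; infer_instance
  · exact Measure.sigmaFinite_of_countable (Set.countable_range fun n : ℕ => ball x n)
      (by rintro _ ⟨n, rfl⟩; exact h x n) (by rw [Set.sUnion_range, iUnion_ball_nat])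

/-- Bilinear Davies–Gaffney type estimate (Lemma of Section 5.3): under the
non-uniform volume growth and the Gaussian kernel bound, for functions `f, g` in
`L²(μ)` supported in open balls `B₁, B₂` at distance greater than `r`,
`|∬ p(x,y) f(x) g(y) dμ(y) dμ(x)| ≤ C (1+t)^{(n₂-n₁)/2} e^{-r²/(8t)} ‖f‖₂ ‖g‖₂`. -/
theorem davies_gaffney_bilinear_estimate {X : Type*} [MetricSpace X] [MeasurableSpace X]
    [BorelSpace X] (μ : Measure X) (C₀ n₁ n₂ : ℝ) (hC₀ : 0 < C₀) (hn₁ : 0 < n₁)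
    (hn : n₁ ≤ n₂)
    (hV₁ : ∀ (x : X) (r : ℝ), 0 < r → r ≤ 1 →
      μ (Metric.ball x r) ≤ ENNReal.ofReal (C₀ * r ^ n₁))
    (hV₂ : ∀ (x : X) (r : ℝ), 1 ≤ r →
      μ (Metric.ball x r) ≤ ENNReal.ofReal (C₀ * r ^ n₂)) :
    ∃ C > 0, ∀ t > (0 : ℝ), ∀ r > (0 : ℝ), ∀ p : X × X → ℝ,
      Measurable p →
      (∀ y z : X, |p (y, z)| ≤ t ^ (-(n₁ / 2)) * Real.exp (-(dist y z) ^ 2 / (4 * t))) →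
      ∀ (x₁ x₂ : X) (r₁ : ℝ), 0 < r₁ → ∀ r₂ : ℝ, 0 < r₂ →
      (∀ y ∈ Metric.ball x₁ r₁, ∀ z ∈ Metric.ball x₂ r₂, r < dist y z) →
      ∀ f g : X → ℝ, MemLp f 2 μ → MemLp g 2 μ →
      (∀ᵐ x ∂μ, x ∉ Metric.ball x₁ r₁ → f x = 0) →
      (∀ᵐ x ∂μ, x ∉ Metric.ball x₂ r₂ → g x = 0) →
      |∫ x, (∫ y, p (x, y) * f x * g y ∂μ) ∂μ|
        ≤ C * (1 + t) ^ ((n₂ - n₁) / 2) * Real.exp (-r ^ 2 / (8 * t))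
          * (eLpNorm f 2 μ).toReal * (eLpNorm g 2 μ).toReal := by
  obtain ⟨C, hC, hgauss⟩ :=
    lintegral_exp_neg_dist_sq_le_of_volume_growth hC₀ (hn₁.le.trans hn) hn hV₁ hV₂
  refine ⟨C, hC, fun t ht r hr p hp hpt x₁ x₂ r₁ _ r₂ _ hsep f g hf hg hf0 hg0 => ?_⟩
  have := sigmaFinite_of_measure_ball_lt_top (μ := μ) fun x r =>
    (measure_mono (ball_subset_ball (le_max_left r 1))).trans_lt
      ((hV₂ x _ (le_max_right r 1)).trans_lt ENNReal.ofReal_lt_top)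
  obtain ⟨hrow, hcol⟩ := lintegral_indicator_enorm_le_of_lt_dist (μ := μ)
    (s := ball x₁ r₁ ×ˢ ball x₂ r₂) (by positivity) hr.le ht (fun z => hpt z.1 z.2)
    (fun z hz => hsep _ hz.1 _ hz.2) (hgauss t ht)
  have key := (enorm_integral_integral_le_lintegral_indicator hf0 hg0).trans
    (lintegral_lintegral_mul_le_of_lintegral_le
      (hp.enorm.indicator (measurableSet_ball.prod measurableSet_ball))
      hf.aestronglyMeasurable.enorm hg.aestronglyMeasurable.enorm hrow hcol)
  rw [eLpNorm_enorm, eLpNorm_enorm] at key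
  have hS : t ^ (-(n₁ / 2)) * exp (-r ^ 2 / (8 * t))
      * (C * (t ^ (n₁ / 2) * (1 + t) ^ ((n₂ - n₁) / 2)))
      = C * (1 + t) ^ ((n₂ - n₁) / 2) * exp (-r ^ 2 / (8 * t)) := by
    rw [rpow_neg ht.le]
    field_simp
  have hS0 : 0 ≤ C * (1 + t) ^ ((n₂ - n₁) / 2) * exp (-r ^ 2 / (8 * t)) := by positivity
  simpa [ENNReal.toReal_mul, hS, ENNReal.toReal_ofReal hS0] using
    ENNReal.toReal_mono (by finiteness) key
end

section
/- Let N be a natural number and let ε > 0 and A > 0 be real numbers. Let F : ℝ → ℂ be N times continuously differentiable on [0,∞) and suppose that for each m = 0, 1, ..., N: |F^{(m)}(λ)| ≤ A for all 0 ≤ λ < 1, and λ^{m+ε} |F^{(m)}(λ)| ≤ A for all λ ≥ 1. Let φ : ℝ → ℝ be a smooth function with support contained in [1/4, 1]. Then the series over ℓ = 1, 2, 3, ... of Σ_{m=0}^{N} (∫_ℝ |(d/dλ)^m [φ(λ) F(2^ℓ λ)]|² dλ)^{1/2} converges. -/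
open MeasureTheory Real Set Filter Topology

lemma my_itdw_eq {f : ℝ → ℂ} {s : Set ℝ} {x : ℝ} (h : s ∈ 𝓝 x) (n : ℕ) :
    iteratedDerivWithin n f s x = iteratedDeriv n f x := by
  have hs : s =ᶠ[𝓝 x] (univ : Set ℝ) :=
    Filter.eventuallyEq_univ.2 (by filter_upwards [h] with y hy using hy)
  simp only [← iteratedDerivWithin_univ, iteratedDerivWithin_eq_iteratedFDerivWithin]
  rw [iteratedFDerivWithin_congr_set hs]

lemma my_scale {F : ℝ → ℂ} {Nn : ℕ} (hF : ContDiffOn ℝ Nn F (Set.Ioi 0))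
    (c : ℝ) (hc : 0 < c) :
    ∀ n ≤ Nn, ∀ x ∈ Set.Ioi (0:ℝ),
      iteratedDeriv n (fun y => F (c * y)) x = c ^ n • iteratedDeriv n F (c * x) := by
  intro n
  induction n with
  | zero => intro _ x _; simp
  | succ n ih =>
    intro hn x hx
    have hn' : n ≤ Nn := le_trans (Nat.le_succ n) hn
    have hx' : c * x ∈ Set.Ioi (0:ℝ) := mul_pos hc hx
    have heq : iteratedDeriv n (fun y => F (c * y)) =ᶠ[𝓝 x]
        fun y => c ^ n • iteratedDeriv n F (c * y) := by
      filter_upwards [isOpen_Ioi.mem_nhds hx] with y hy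
      exact ih hn' y hy
    have hdOn : DifferentiableOn ℝ (iteratedDerivWithin n F (Set.Ioi 0)) (Set.Ioi 0) :=
      hF.differentiableOn_iteratedDerivWithin (by exact_mod_cast Nat.lt_of_succ_le hn)
        isOpen_Ioi.uniqueDiffOn
    have hdiff : DifferentiableAt ℝ (iteratedDeriv n F) (c * x) := by
      have h1 : DifferentiableAt ℝ (iteratedDerivWithin n F (Set.Ioi 0)) (c * x) :=
        (hdOn (c * x) hx').differentiableAt (isOpen_Ioi.mem_nhds hx')
      refine h1.congr_of_eventuallyEq ?_
      filter_upwards [isOpen_Ioi.mem_nhds hx'] with y hy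
      exact (my_itdw_eq (isOpen_Ioi.mem_nhds hy) n).symm
    have houter : HasDerivAt (iteratedDeriv n F) (iteratedDeriv (n + 1) F (c * x)) (c * x) := by
      rw [iteratedDeriv_succ]; exact hdiff.hasDerivAt
    have hinner : HasDerivAt (fun y : ℝ => c * y) c x := by
      simpa using (hasDerivAt_id x).const_mul c
    have hcomp : HasDerivAt (fun y : ℝ => iteratedDeriv n F (c * y))
        (c • iteratedDeriv (n + 1) F (c * x)) x := by
      simpa [Function.comp_def] using HasDerivAt.scomp x houter hinner
    have hfin : HasDerivAt (fun y : ℝ => c ^ n • iteratedDeriv n F (c * y))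
        (c ^ n • (c • iteratedDeriv (n + 1) F (c * x))) x := hcomp.const_smul (c ^ n)
    rw [iteratedDeriv_succ, heq.deriv_eq, hfin.deriv, smul_smul, ← pow_succ]

lemma my_itd_zero (m : ℕ) (x : ℝ) : iteratedDeriv m (fun _ : ℝ => (0:ℂ)) x = 0 := by
  induction m generalizing x with
  | zero => simp
  | succ m ih =>
    rw [iteratedDeriv_succ']
    simpa [deriv_const'] using ih x

lemma my_arith (ε A c x : ℝ) (hε : 0 < ε) (hA : 0 < A) (hc4 : 4 ≤ c)
    (hx1 : 1/4 ≤ x) (N : ℕ) :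
    ∀ j : ℕ, j ≤ N → ∀ v : ℝ, 0 ≤ v → v ≤ A * (c*x) ^ (-(j:ℝ) - ε) →
      c ^ j * v ≤ A * ((4:ℝ)^N * (4:ℝ)^ε) * c ^ (-ε) := by
  intro j hj v hv0 hv
  have hc0 : (0:ℝ) < c := by linarith
  have hx0 : (0:ℝ) < x := by linarith
  have ht0 : (0:ℝ) < c * x := mul_pos hc0 hx0
  have e1 : (c*x) ^ (-(j:ℝ) - ε) = ((c^j)⁻¹ * (x⁻¹)^j) * (c ^ (-ε) * x ^ (-ε)) := by
    rw [show -(j:ℝ) - ε = (-(j:ℝ)) + (-ε) by ring, Real.rpow_add ht0,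
      Real.rpow_neg ht0.le, Real.rpow_natCast, mul_pow, mul_inv, ← inv_pow,
      Real.mul_rpow hc0.le hx0.le, inv_pow, inv_pow]
  have hle : c ^ j * v ≤ c ^ j * (A * (c*x) ^ (-(j:ℝ) - ε)) := by
    apply mul_le_mul_of_nonneg_left hv (by positivity)
  refine hle.trans ?_
  rw [e1]
  have e2 : c ^ j * (A * ((c^j)⁻¹ * (x⁻¹)^j * (c ^ (-ε) * x ^ (-ε))))
      = A * (x⁻¹)^j * (c ^ (-ε) * x ^ (-ε)) := by
    field_simp
  rw [e2]
  have h1 : (x⁻¹)^j ≤ (4:ℝ)^N := by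
    calc (x⁻¹)^j ≤ (4:ℝ)^j := by
          apply pow_le_pow_left₀ (by positivity)
          rw [inv_le_comm₀ hx0 (by norm_num)]
          linarith
      _ ≤ (4:ℝ)^N := pow_le_pow_right₀ (by norm_num) hj
  have h2 : x ^ (-ε) ≤ (4:ℝ)^ε := by
    rw [Real.rpow_neg hx0.le]
    have h3 : ((4:ℝ)^ε)⁻¹ ≤ x ^ ε := by
      have e4 : ((4:ℝ)^ε)⁻¹ = ((1:ℝ)/4) ^ ε := by
        rw [one_div, ← Real.inv_rpow (by norm_num)]
      rw [e4]
      exact Real.rpow_le_rpow (by norm_num) hx1 hε.le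
    calc (x ^ ε)⁻¹ ≤ (((4:ℝ)^ε)⁻¹)⁻¹ := by gcongr
      _ = (4:ℝ)^ε := inv_inv _
  calc A * (x⁻¹)^j * (c ^ (-ε) * x ^ (-ε)) ≤ A * (4:ℝ)^N * (c ^ (-ε) * (4:ℝ)^ε) := by
        gcongr <;> positivity
    _ = A * ((4:ℝ)^N * (4:ℝ)^ε) * c ^ (-ε) := by ring

/-- Dyadic-decomposition estimate underlying Corollary 3.2: if `F` is `N` times
continuously differentiable on `[0,∞)` with `|F^{(m)}(λ)| ≤ A` for `0 ≤ λ < 1` and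
`λ^{m+ε} |F^{(m)}(λ)| ≤ A` for `λ ≥ 1` (for `m = 0,…,N`), and `φ` is smooth with
support in `[1/4, 1]`, then the series over `ℓ ≥ 1` of
`Σ_{m=0}^{N} (∫ |(d/dλ)^m [φ(λ) F(2^ℓ λ)]|² dλ)^{1/2}` converges. -/
theorem dyadic_sobolev_summability (N : ℕ) (ε A : ℝ) (hε : 0 < ε) (hA : 0 < A)
    (F : ℝ → ℂ) (hF : ContDiffOn ℝ N F (Set.Ici 0))
    (hsmall : ∀ m ≤ N, ∀ lam : ℝ, 0 ≤ lam → lam < 1 →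
      ‖iteratedDerivWithin m F (Set.Ici 0) lam‖ ≤ A)
    (hlarge : ∀ m ≤ N, ∀ lam : ℝ, 1 ≤ lam →
      lam ^ ((m : ℝ) + ε) * ‖iteratedDerivWithin m F (Set.Ici 0) lam‖ ≤ A)
    (φ : ℝ → ℝ) (hφ : ContDiff ℝ (⊤ : ℕ∞) φ)
    (hφsupp : Function.support φ ⊆ Set.Icc (1 / 4 : ℝ) 1) :
    Summable (fun ℓ : ℕ => ∑ m ∈ Finset.range (N + 1),
      (∫ lam : ℝ,
          ‖iteratedDeriv m (fun x : ℝ => (φ x : ℂ) * F ((2 : ℝ) ^ (ℓ + 1) * x)) lam‖ ^ 2)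
        ^ ((1 : ℝ) / 2)) := by
  classical
  have hFS : ContDiffOn ℝ N F (Set.Ioi 0) := hF.mono Set.Ioi_subset_Ici_self
  have hφCN : ContDiff ℝ N (fun x : ℝ => (φ x : ℂ)) :=
    Complex.ofRealCLM.contDiff.comp (hφ.of_le (by exact_mod_cast le_top))
  -- uniform bound on derivatives of φ on [1/4, 1]
  obtain ⟨Mφ, hMφ0, hMφ⟩ : ∃ Mφ : ℝ, 0 ≤ Mφ ∧ ∀ i ≤ N, ∀ x ∈ Set.Icc (1/4:ℝ) 1,
      ‖iteratedDeriv i (fun x : ℝ => (φ x : ℂ)) x‖ ≤ Mφ := by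
    have hGc : Continuous (fun x : ℝ => ∑ i ∈ Finset.range (N+1),
        ‖iteratedDeriv i (fun x : ℝ => (φ x : ℂ)) x‖) := by
      apply continuous_finset_sum
      intro i hi
      exact (hφCN.continuous_iteratedDeriv i
        (by exact_mod_cast Nat.lt_succ_iff.mp (Finset.mem_range.1 hi))).norm
    obtain ⟨C, hC⟩ :=
      (isCompact_Icc (a := (1/4:ℝ)) (b := 1)).exists_bound_of_continuousOn hGc.continuousOn
    refine ⟨max C 0, le_max_right _ _, fun i hi x hx => ?_⟩
    have h1 : ‖iteratedDeriv i (fun x : ℝ => (φ x : ℂ)) x‖ ≤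
        ∑ j ∈ Finset.range (N+1), ‖iteratedDeriv j (fun x : ℝ => (φ x : ℂ)) x‖ :=
      Finset.single_le_sum (f := fun j => ‖iteratedDeriv j (fun x : ℝ => (φ x : ℂ)) x‖)
        (fun j _ => norm_nonneg _) (Finset.mem_range.2 (Nat.lt_succ_of_le hi))
    refine h1.trans (le_trans (le_trans (le_abs_self _) ?_) (le_max_left C 0))
    rw [← Real.norm_eq_abs]
    exact hC x hx
  -- decay bound for derivatives of F
  have hbound : ∀ m ≤ N, ∀ lam : ℝ, 1 ≤ lam →
      ‖iteratedDeriv m F lam‖ ≤ A * lam ^ (-(m:ℝ) - ε) := by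
    intro m hm lam hlam
    have hpos : (0:ℝ) < lam := lt_of_lt_of_le one_pos hlam
    have h1 := hlarge m hm lam hlam
    rw [my_itdw_eq (Ici_mem_nhds hpos) m] at h1
    have hp : (0:ℝ) < lam ^ ((m:ℝ) + ε) := Real.rpow_pos_of_pos hpos _
    rw [show -(m:ℝ) - ε = -((m:ℝ)+ε) by ring, Real.rpow_neg hpos.le, ← div_eq_mul_inv,
      le_div_iff₀ hp]
    rwa [mul_comm]
  set W : ℝ := A * ((4:ℝ)^N * (4:ℝ)^ε) with hWdef
  have hW0 : 0 < W := by positivity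
  set D : ℝ := (2:ℝ)^N * Mφ * W with hDdef
  have hD0 : 0 ≤ D := mul_nonneg (mul_nonneg (by positivity) hMφ0) hW0.le
  -- the main estimate for a single dyadic piece
  have main : ∀ c : ℝ, 4 ≤ c →
      (∑ m ∈ Finset.range (N + 1),
        (∫ lam : ℝ, ‖iteratedDeriv m (fun x : ℝ => (φ x : ℂ) * F (c * x)) lam‖ ^ 2)
          ^ ((1 : ℝ) / 2)) ≤ ((N:ℝ)+1) * D * c ^ (-ε) := by
    intro c hc4
    have hc0 : (0:ℝ) < c := by linarith
    set H : ℝ → ℂ := fun x : ℝ => (φ x : ℂ) * F (c * x) with hHdef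
    have hzero : ∀ x : ℝ, x ∉ Set.Icc (1/4:ℝ) 1 → ∀ m : ℕ, iteratedDeriv m H x = 0 := by
      intro x hx m
      have hEv : H =ᶠ[𝓝 x] fun _ => (0:ℂ) := by
        filter_upwards [isClosed_Icc.isOpen_compl.mem_nhds hx] with y hy
        have hy' : φ y = 0 := by
          by_contra h; exact hy (hφsupp (Function.mem_support.2 h))
        simp [hHdef, hy']
      rw [hEv.iteratedDeriv_eq m, my_itd_zero]
    have hH : ContDiff ℝ N H := by
      rw [contDiff_iff_contDiffAt]
      intro x
      by_cases hx : 0 < x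
      · have h2 : ContDiffAt ℝ N F (c*x) := hF.contDiffAt (Ici_mem_nhds (mul_pos hc0 hx))
        exact hφCN.contDiffAt.mul (h2.comp x ((contDiff_const.mul contDiff_id).contDiffAt))
      · have hEv : H =ᶠ[𝓝 x] fun _ => (0:ℂ) := by
          filter_upwards [Iio_mem_nhds (show x < 1/4 by push_neg at hx; linarith)] with y hy
          have hy' : φ y = 0 := by
            by_contra h
            exact absurd ((hφsupp (Function.mem_support.2 h)).1) (not_le.2 hy)
          simp [hHdef, hy']
        exact (contDiffAt_const (c := (0:ℂ))).congr_of_eventuallyEq hEv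
    -- pointwise bound on all derivatives of H
    have key : ∀ m ≤ N, ∀ x : ℝ, ‖iteratedDeriv m H x‖ ≤ D * c ^ (-ε) := by
      intro m hm x
      by_cases hx : x ∈ Set.Icc (1/4:ℝ) 1
      · have hxS : x ∈ Set.Ioi (0:ℝ) := lt_of_lt_of_le (by norm_num) hx.1
        have hKon : ContDiffOn ℝ N (fun y : ℝ => F (c * y)) (Set.Ioi 0) := by
          apply hFS.comp ((contDiff_const.mul contDiff_id).contDiffOn)
          intro y hy; exact mul_pos hc0 hy
        have hmul := norm_iteratedFDerivWithin_mul_le (𝕜 := ℝ)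
          hφCN.contDiffOn hKon isOpen_Ioi.uniqueDiffOn hxS (n := m) (by exact_mod_cast hm)
        have hrewr : ‖iteratedDeriv m H x‖
            = ‖iteratedFDerivWithin ℝ m H (Set.Ioi 0) x‖ := by
          rw [norm_iteratedFDerivWithin_eq_norm_iteratedDerivWithin,
            my_itdw_eq (isOpen_Ioi.mem_nhds hxS)]
        rw [hrewr]
        refine le_trans hmul ?_
        have hstep : ∀ i ∈ Finset.range (m+1),
            (m.choose i : ℝ) * ‖iteratedFDerivWithin ℝ i (fun x : ℝ => (φ x : ℂ)) (Set.Ioi 0) x‖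
              * ‖iteratedFDerivWithin ℝ (m - i) (fun y : ℝ => F (c * y)) (Set.Ioi 0) x‖
            ≤ (m.choose i : ℝ) * Mφ * (W * c ^ (-ε)) := by
          intro i hi
          have him : i ≤ m := Nat.lt_succ_iff.mp (Finset.mem_range.1 hi)
          have hiN : i ≤ N := him.trans hm
          have hjN : m - i ≤ N := (Nat.sub_le m i).trans hm
          have b1 : ‖iteratedFDerivWithin ℝ i (fun x : ℝ => (φ x : ℂ)) (Set.Ioi 0) x‖
              ≤ Mφ := by
            rw [norm_iteratedFDerivWithin_eq_norm_iteratedDerivWithin,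
              my_itdw_eq (isOpen_Ioi.mem_nhds hxS)]
            exact hMφ i hiN x hx
          have b2 : ‖iteratedFDerivWithin ℝ (m - i) (fun y : ℝ => F (c * y)) (Set.Ioi 0) x‖
              ≤ W * c ^ (-ε) := by
            rw [norm_iteratedFDerivWithin_eq_norm_iteratedDerivWithin,
              my_itdw_eq (isOpen_Ioi.mem_nhds hxS),
              my_scale hFS c hc0 (m - i) hjN x hxS, norm_smul,
              Real.norm_eq_abs, abs_of_pos (pow_pos hc0 _), hWdef]
            apply my_arith ε A c x hε hA hc4 hx.1 N (m - i) hjN _ (norm_nonneg _)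
            have hcx1 : (1:ℝ) ≤ c * x := by nlinarith [hx.1]
            exact hbound (m - i) hjN (c * x) hcx1
          have hnn : 0 ≤ (m.choose i : ℝ) * Mφ := mul_nonneg (by positivity) hMφ0
          exact mul_le_mul (mul_le_mul_of_nonneg_left b1 (by positivity)) b2
            (norm_nonneg _) hnn
        refine le_trans (Finset.sum_le_sum hstep) ?_
        have hsum : ∑ i ∈ Finset.range (m+1), (m.choose i : ℝ) * Mφ * (W * c ^ (-ε))
            = (2:ℝ)^m * (Mφ * (W * c ^ (-ε))) := by
          simp only [mul_assoc]
          rw [← Finset.sum_mul, ← Nat.cast_sum, Nat.sum_range_choose]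
          push_cast
          ring
        rw [hsum]
        have h2m : (2:ℝ)^m ≤ (2:ℝ)^N := pow_le_pow_right₀ one_le_two hm
        calc (2:ℝ)^m * (Mφ * (W * c ^ (-ε))) ≤ (2:ℝ)^N * (Mφ * (W * c ^ (-ε))) :=
              mul_le_mul_of_nonneg_right h2m
                (mul_nonneg hMφ0 (mul_nonneg hW0.le (by positivity)))
          _ = D * c ^ (-ε) := by rw [hDdef]; ring
      · rw [hzero x hx m, norm_zero]
        exact mul_nonneg hD0 (by positivity)
    -- integral bound for each m
    have hterm : ∀ m ≤ N,
        (∫ lam : ℝ, ‖iteratedDeriv m H lam‖ ^ 2) ^ ((1:ℝ)/2) ≤ D * c ^ (-ε) := by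
      intro m hm
      have hB0 : 0 ≤ D * c ^ (-ε) := mul_nonneg hD0 (by positivity)
      have hcont : Continuous fun lam : ℝ => ‖iteratedDeriv m H lam‖ ^ 2 :=
        (hH.continuous_iteratedDeriv m (by exact_mod_cast hm)).norm.pow 2
      have hCS : HasCompactSupport fun lam : ℝ => ‖iteratedDeriv m H lam‖ ^ 2 := by
        apply HasCompactSupport.intro (isCompact_Icc (a := (1/4:ℝ)) (b := 1))
        intro x hx; simp [hzero x hx m]
      have hInt : Integrable fun lam : ℝ => ‖iteratedDeriv m H lam‖ ^ 2 :=
        hcont.integrable_of_hasCompactSupport hCS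
      have hIndInt : Integrable
          ((Set.Icc (1/4:ℝ) 1).indicator fun _ => (D * c ^ (-ε)) ^ 2) :=
        (integrableOn_const measure_Icc_lt_top.ne).integrable_indicator
          measurableSet_Icc
      have hIle : (∫ lam : ℝ, ‖iteratedDeriv m H lam‖ ^ 2) ≤ (D * c ^ (-ε)) ^ 2 := by
        have h1 : (∫ lam : ℝ, ‖iteratedDeriv m H lam‖ ^ 2)
            ≤ ∫ lam : ℝ, (Set.Icc (1/4:ℝ) 1).indicator (fun _ => (D * c ^ (-ε)) ^ 2) lam := by
          apply integral_mono hInt hIndInt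
          intro y
          by_cases hy : y ∈ Set.Icc (1/4:ℝ) 1
          · rw [Set.indicator_of_mem hy]
            exact pow_le_pow_left₀ (norm_nonneg _) (key m hm y) 2
          · rw [Set.indicator_of_notMem hy]
            simp [hzero y hy m]
        refine h1.trans ?_
        rw [integral_indicator_const _ measurableSet_Icc, measureReal_def, Real.volume_Icc]
        rw [show ((1:ℝ) - 1/4) = 3/4 by norm_num, ENNReal.toReal_ofReal (by norm_num)]
        rw [smul_eq_mul]
        nlinarith [sq_nonneg (D * c ^ (-ε))]
      have h0 : 0 ≤ ∫ lam : ℝ, ‖iteratedDeriv m H lam‖ ^ 2 :=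
        integral_nonneg fun y => by positivity
      calc (∫ lam : ℝ, ‖iteratedDeriv m H lam‖ ^ 2) ^ ((1:ℝ)/2)
          ≤ ((D * c ^ (-ε)) ^ 2) ^ ((1:ℝ)/2) := Real.rpow_le_rpow h0 hIle (by norm_num)
        _ = D * c ^ (-ε) := by
            rw [← Real.rpow_natCast (D * c ^ (-ε)) 2, ← Real.rpow_mul hB0]
            norm_num
    calc (∑ m ∈ Finset.range (N + 1),
          (∫ lam : ℝ, ‖iteratedDeriv m H lam‖ ^ 2) ^ ((1 : ℝ) / 2))
        ≤ ∑ m ∈ Finset.range (N + 1), D * c ^ (-ε) :=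
          Finset.sum_le_sum fun m hm => hterm m (Nat.lt_succ_iff.mp (Finset.mem_range.1 hm))
      _ = ((N:ℝ)+1) * D * c ^ (-ε) := by
          rw [Finset.sum_const, Finset.card_range, nsmul_eq_mul]
          push_cast
          ring
  -- conclude by geometric comparison, dropping the first term
  rw [← _root_.summable_nat_add_iff 1]
  set r : ℝ := (2:ℝ) ^ (-ε) with hrdef
  have hr0 : 0 ≤ r := Real.rpow_nonneg (by norm_num) _
  have hr1 : r < 1 := Real.rpow_lt_one_of_one_lt_of_neg one_lt_two (by linarith)
  apply Summable.of_nonneg_of_le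
    ?_ ?_ ((summable_geometric_of_lt_one hr0 hr1).mul_left (((N:ℝ)+1) * D))
  · intro n
    apply Finset.sum_nonneg
    intro m _
    exact Real.rpow_nonneg (integral_nonneg fun y => by positivity) _
  · intro n
    have h4 : (4:ℝ) ≤ (2:ℝ) ^ (n + 1 + 1) := by
      calc (4:ℝ) = 2^2 := by norm_num
        _ ≤ 2^(n+1+1) := pow_le_pow_right₀ one_le_two (by omega)
    refine le_trans (main _ h4) ?_
    have hcr : ((2:ℝ) ^ (n + 1 + 1)) ^ (-ε) ≤ r ^ n := by
      rw [hrdef, ← Real.rpow_natCast (2:ℝ) (n+1+1), ← Real.rpow_natCast ((2:ℝ) ^ (-ε)) n,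
        ← Real.rpow_mul (by norm_num : (0:ℝ) ≤ 2), ← Real.rpow_mul (by norm_num : (0:ℝ) ≤ 2)]
      apply Real.rpow_le_rpow_of_exponent_le one_le_two
      push_cast
      nlinarith [Nat.cast_nonneg (α := ℝ) n, hε]
    exact mul_le_mul_of_nonneg_left hcr (mul_nonneg (by positivity) hD0)
end
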